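/- arXiv:1012.5907 — 4 statements merged into one kernel-verified Lean document; each statement's English description precedes it below -/
import Mathlib

section
/- Let G be a finite simple graph containing an induced K_{2,3}: distinct vertices x_1, x_2, y_1, y_2, y_3 of G such that among these five vertices exactly the pairs x_i y_j (i ∈ {1,2}, j ∈ {1,2,3}) are edges. In every 1-obstacle representation v of G: the convex hull of {v(x_1), v(x_2)} is disjoint from the convex hull of {v(y_1), v(y_2), v(y_3)} (the two parts are linearly separable); moreover, x_1 and x_2 induce the same sight ordering of {v(y_1), v(y_2), v(y_3)} (for all j, j', the point v(x_1) sees v(y_j) to the left of v(y_{j'}) if and only if v(x_2) does), and y_1, y_2, y_3 induce the same sight ordering of {v(x_1), v(x_2)}. -/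
/-!
Everything is read off signs of the orientation determinant `orient`. Two `x`'s and two `y`'s
span a quadrilateral `x₁ y x₂ y'` whose four sides are edges, so the connected obstacle stays in
one complementary region of it. If `y` and `y'` lie on opposite sides of `x₁ x₂`, the obstacle
blocks the diagonal `x₁ x₂` and is therefore inside, i.e. in the union of the triangles
`x₁ x₂ y`, `x₁ x₂ y'` glued along that diagonal; as it also blocks the diagonal `y y'`, the
two diagonals cross. So whenever the line through one diagonal separates the endpoints of the
other, the diagonals cross. A third `y''` lies on the side of `y`, say; the obstacle point on
`y y''` is then inside the triangle `x₁ x₂ y`, so the line `y y''` separates `x₁` from `x₂`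
although `y` and `y''` lie on the same side of `x₁ x₂`, a contradiction. Hence all `y`'s lie
strictly on one side of `x₁ x₂`, which gives the separation and the common sight ordering from
the `y`'s; by the crossing property no line `y y'` separates `x₁` from `x₂` either.
-/

open Set

/-- General position: no three of the points `v p` are collinear. -/
def GenPos {V : Type*} (v : V → ℝ × ℝ) : Prop :=
  ∀ p q r : V, p ≠ q → p ≠ r → q ≠ r → ¬ Collinear ℝ ({v p, v q, v r} : Set (ℝ × ℝ))

/-- An `h`-obstacle representation of a simple graph `G`: an injective drawing
`v` of the vertices in general position, together with `h` obstacles (nonempty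
compact connected sets), each obstacle avoiding every closed edge segment and
every vertex point, such that every non-edge's open segment meets some obstacle. -/
structure ObstacleRep {V : Type*} (G : SimpleGraph V) (h : ℕ) where
  v : V → ℝ × ℝ
  inj : Function.Injective v
  genpos : GenPos v
  obs : Fin h → Set (ℝ × ℝ)
  obs_compact : ∀ i, IsCompact (obs i)
  obs_connected : ∀ i, IsConnected (obs i)
  obs_avoid_edges : ∀ i, ∀ p q : V, G.Adj p q → Disjoint (obs i) (segment ℝ (v p) (v q))
  obs_avoid_vertices : ∀ i, ∀ p : V, v p ∉ obs i
  blocks : ∀ p q : V, p ≠ q → ¬ G.Adj p q →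
    ∃ i, ((obs i) ∩ openSegment ℝ (v p) (v q)).Nonempty

/-- `a` sees `b` to the left of `c`: the triple `(a, b, c)` is in clockwise order
(negative orientation). -/
def SeesLeft (a b c : ℝ × ℝ) : Prop :=
  (b.1 - a.1) * (c.2 - a.2) - (b.2 - a.2) * (c.1 - a.1) < 0

def orient (a b c : ℝ × ℝ) : ℝ :=
  (b.1 - a.1) * (c.2 - a.2) - (b.2 - a.2) * (c.1 - a.1)

theorem seesLeft_iff_orient_neg (a b c : ℝ × ℝ) : SeesLeft a b c ↔ orient a b c < 0 := Iff.rfl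

section Orient

variable (a b c u w p q z : ℝ × ℝ)

theorem orient_rotate : orient a b c = orient b c a := by unfold orient; ring

theorem orient_swap : orient b a c = -orient a b c := by unfold orient; ring

theorem orient_self_left : orient a b a = 0 := by unfold orient; ring

theorem orient_self_right : orient a b b = 0 := by unfold orient; ring

theorem orient_smul_add_smul {s t : ℝ} (hst : s + t = 1) :
    orient a b (s • p + t • q) = s * orient a b p + t * orient a b q := by
  simp only [orient, Prod.fst_add, Prod.snd_add, Prod.smul_fst, Prod.smul_snd, smul_eq_mul]
  linear_combination ((b.1 - a.1) * a.2 - (b.2 - a.2) * a.1) * hst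

theorem continuous_orient : Continuous (orient a b) := by unfold orient; fun_prop

/-- Cramer's rule: the barycentric coordinates of `z` in the triangle `u w p`. -/
theorem orient_barycentric_sum : orient w p z + orient p u z + orient u w z = orient u w p := by
  unfold orient; ring

theorem orient_barycentric_smul :
    orient w p z • u + orient p u z • w + orient u w z • p = orient u w p • z := by
  ext <;> simp only [orient, Prod.fst_add, Prod.snd_add, Prod.smul_fst, Prod.smul_snd,
    smul_eq_mul] <;> ring

theorem orient_mul_orient_eq_of_orient_eq_zero (hz : orient u w z = 0) :
    orient u w p * orient w q z = orient u w q * orient w p z ∧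
      orient u w p * orient q u z = orient u w q * orient p u z := by
  have e₁ : orient u w p * orient w q z - orient u w q * orient w p z =
      -(orient u w z * orient w p q) := by unfold orient; ring
  have e₂ : orient u w p * orient q u z - orient u w q * orient p u z =
      orient u w z * orient u p q := by unfold orient; ring
  rw [hz, zero_mul, neg_zero, sub_eq_zero] at e₁
  rw [hz, zero_mul, sub_eq_zero] at e₂
  exact ⟨e₁, e₂⟩

end Orient

theorem collinear_of_orient_eq_zero {a b c : ℝ × ℝ} (h : orient a b c = 0) :
    Collinear ℝ ({a, b, c} : Set (ℝ × ℝ)) := by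
  rcases eq_or_ne a b with rfl | hab
  · simpa using collinear_pair ℝ a c
  rw [collinear_iff_of_mem (p₀ := a) (by simp)]
  refine ⟨b - a, ?_⟩
  simp only [mem_insert_iff, mem_singleton_iff, forall_eq_or_imp, forall_eq]
  refine ⟨⟨0, by simp⟩, ⟨1, by simp⟩, ?_⟩
  unfold orient at h
  obtain h1 | h2 : b.1 - a.1 ≠ 0 ∨ b.2 - a.2 ≠ 0 := by
    by_contra! h0
    exact hab (Prod.ext (by linarith [h0.1]) (by linarith [h0.2]))
  · refine ⟨(c.1 - a.1) / (b.1 - a.1), Prod.ext ?_ ?_⟩ <;>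
      simp only [vadd_eq_add, Prod.fst_add, Prod.snd_add, Prod.smul_fst, Prod.smul_snd,
        Prod.fst_sub, Prod.snd_sub, smul_eq_mul] <;> field_simp
    · ring
    · linear_combination h
  · refine ⟨(c.2 - a.2) / (b.2 - a.2), Prod.ext ?_ ?_⟩ <;>
      simp only [vadd_eq_add, Prod.fst_add, Prod.snd_add, Prod.smul_fst, Prod.smul_snd,
        Prod.fst_sub, Prod.snd_sub, smul_eq_mul] <;> field_simp
    · linear_combination -h
    · ring

theorem GenPos.orient_ne_zero {V : Type*} {v : V → ℝ × ℝ} (hv : GenPos v) {p q r : V}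
    (hpq : p ≠ q) (hpr : p ≠ r) (hqr : q ≠ r) : orient (v p) (v q) (v r) ≠ 0 :=
  fun h => hv p q r hpq hpr hqr (collinear_of_orient_eq_zero h)

theorem mem_segment_of_smul_add_smul_eq {E : Type*} [AddCommGroup E] [Module ℝ E]
    {a b z : E} {α β D : ℝ} (hα : 0 ≤ α) (hβ : 0 ≤ β) (hD : 0 < D) (hsum : α + β = D)
    (h : α • a + β • b = D • z) : z ∈ segment ℝ a b := by
  refine ⟨α / D, β / D, by positivity, by positivity, by field_simp; linarith, ?_⟩
  rw [div_eq_inv_mul, div_eq_inv_mul, mul_smul, mul_smul, ← smul_add, h, smul_smul,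
    inv_mul_cancel₀ hD.ne', one_smul]

def SameSide (u w p q : ℝ × ℝ) : Prop := 0 < orient u w p * orient u w q

def OppSide (u w p q : ℝ × ℝ) : Prop := orient u w p * orient u w q < 0

section Sides

variable {u w p q : ℝ × ℝ}

theorem sameSide_self (hp : orient u w p ≠ 0) : SameSide u w p p := mul_self_pos.2 hp

theorem sameSide_of_not_oppSide (hp : orient u w p ≠ 0) (hq : orient u w q ≠ 0)
    (h : ¬OppSide u w p q) : SameSide u w p q :=
  (not_lt.1 h).lt_of_ne' (mul_ne_zero hp hq)

theorem SameSide.not_oppSide (h : SameSide u w p q) : ¬OppSide u w p q := h.not_gt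

theorem SameSide.swap (h : SameSide u w p q) : SameSide w u p q := by
  rwa [SameSide, orient_swap u w p, orient_swap u w q, neg_mul_neg]

theorem OppSide.swap (h : OppSide u w p q) : OppSide w u p q := by
  rwa [OppSide, orient_swap u w p, orient_swap u w q, neg_mul_neg]

theorem OppSide.symm (h : OppSide u w p q) : OppSide u w q p := by
  rwa [OppSide, mul_comm]

theorem SameSide.seesLeft_iff {a a' : ℝ × ℝ} (h : SameSide u w a a') :
    SeesLeft a u w ↔ SeesLeft a' u w := by
  rw [seesLeft_iff_orient_neg, seesLeft_iff_orient_neg, orient_rotate a, orient_rotate a']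
  exact neg_iff_neg_of_mul_pos h

theorem SameSide.fin_two_seesLeft_iff {a : Fin 2 → ℝ × ℝ} (h : SameSide u w (a 0) (a 1))
    (i i' : Fin 2) : SeesLeft (a i) u w ↔ SeesLeft (a i') u w := by
  have h₀ : ∀ i, SeesLeft (a i) u w ↔ SeesLeft (a 0) u w :=
    Fin.forall_fin_two.2 ⟨Iff.rfl, h.seesLeft_iff.symm⟩
  exact (h₀ i).trans (h₀ i').symm

theorem SameSide.seesLeft_fin_two_iff {a : Fin 2 → ℝ × ℝ} (h : SameSide (a 0) (a 1) p q)
    (i i' : Fin 2) : SeesLeft p (a i) (a i') ↔ SeesLeft q (a i) (a i') := by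
  rcases eq_or_ne i i' with rfl | hii
  · simp [seesLeft_iff_orient_neg, orient_self_right]
  obtain ⟨rfl, rfl⟩ | ⟨rfl, rfl⟩ : i = 0 ∧ i' = 1 ∨ i = 1 ∧ i' = 0 := by revert i i'; decide
  · exact h.seesLeft_iff
  · exact h.swap.seesLeft_iff

end Sides

theorem Convex.setOf_orient_mem {s : Set ℝ} (hs : Convex ℝ s) (u w : ℝ × ℝ) :
    Convex ℝ {z | orient u w z ∈ s} := by
  intro z₁ h₁ z₂ h₂ α β hα hβ hαβ
  show orient u w _ ∈ s
  rw [orient_smul_add_smul _ _ _ _ hαβ]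
  exact hs h₁ h₂ hα hβ hαβ

theorem disjoint_convexHull_of_sameSide {u w : ℝ × ℝ} {S T : Set (ℝ × ℝ)}
    (hS : ∀ s ∈ S, orient u w s = 0) (hT : ∀ t ∈ T, ∀ t' ∈ T, SameSide u w t t') :
    Disjoint (convexHull ℝ S) (convexHull ℝ T) := by
  rcases T.eq_empty_or_nonempty with rfl | ⟨t₀, ht₀⟩
  · simp
  have hS' : convexHull ℝ S ⊆ {z | orient u w z ∈ ({0} : Set ℝ)} :=
    convexHull_min hS ((convex_singleton 0).setOf_orient_mem u w)
  have hT' : convexHull ℝ T ⊆ {z | orient u w z ∈ {r | 0 < orient u w t₀ * r}} :=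
    convexHull_min (hT t₀ ht₀)
      ((convex_halfSpace_gt (LinearMap.mulLeft ℝ (orient u w t₀)).isLinear 0).setOf_orient_mem
        u w)
  refine disjoint_left.2 fun z hzS hzT => ?_
  have hz : orient u w z = 0 := hS' hzS
  have := hT' hzT
  simp [hz] at this

def AvoidsSegments {E : Type*} [AddCommGroup E] [Module ℝ E] (O A B : Set E) : Prop :=
  ∀ a ∈ A, ∀ b ∈ B, Disjoint O (segment ℝ a b)

section AvoidsSegments

variable {E : Type*} [AddCommGroup E] [Module ℝ E] {O A B : Set E}

theorem AvoidsSegments.symm (h : AvoidsSegments O A B) : AvoidsSegments O B A :=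
  fun b hb a ha => segment_symm ℝ a b ▸ h a ha b hb

theorem AvoidsSegments.mono {A' B' : Set E} (h : AvoidsSegments O A B) (hA : A' ⊆ A)
    (hB : B' ⊆ B) : AvoidsSegments O A' B' :=
  fun a ha b hb => h a (hA ha) b (hB hb)

end AvoidsSegments

/-- The interior of the quadrilateral `u p w q` when `p` lies to the left and `q` to the right
of `u w`: the open triangles `u w p`, `u w q` and the open diagonal between them. -/
def quadInterior (u w p q : ℝ × ℝ) : Set (ℝ × ℝ) :=
  {z | (0 < orient w p z ∧ 0 < orient p u z ∧
        (0 < orient u w z ∨ (orient w q z < 0 ∧ orient q u z < 0))) ∨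
      (orient u w z < 0 ∧ orient w q z < 0 ∧ orient q u z < 0)}

def quadExterior (u w p q : ℝ × ℝ) : Set (ℝ × ℝ) :=
  {z | (0 < orient u w z ∧ (orient w p z < 0 ∨ orient p u z < 0)) ∨
      (orient u w z < 0 ∧ (0 < orient w q z ∨ 0 < orient q u z)) ∨
      (orient w p z < 0 ∧ 0 < orient w q z) ∨ (orient p u z < 0 ∧ 0 < orient q u z)}

theorem isOpen_setOf_orient_pos (a b : ℝ × ℝ) : IsOpen {z | 0 < orient a b z} :=
  isOpen_lt continuous_const (continuous_orient a b)

theorem isOpen_setOf_orient_neg (a b : ℝ × ℝ) : IsOpen {z | orient a b z < 0} :=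
  isOpen_lt (continuous_orient a b) continuous_const

section Quadrilateral

variable {u w p q : ℝ × ℝ}

theorem isOpen_quadInterior : IsOpen (quadInterior u w p q) := by
  unfold quadInterior
  apply_rules [IsOpen.and, IsOpen.union, isOpen_setOf_orient_pos, isOpen_setOf_orient_neg]

theorem isOpen_quadExterior : IsOpen (quadExterior u w p q) := by
  unfold quadExterior
  apply_rules [IsOpen.and, IsOpen.union, isOpen_setOf_orient_pos, isOpen_setOf_orient_neg]

theorem disjoint_quadInterior_quadExterior :
    Disjoint (quadInterior u w p q) (quadExterior u w p q) := by
  refine disjoint_left.2 fun z hI hE => ?_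
  rcases hI with ⟨h₁, h₂, h₃ | ⟨h₃, h₄⟩⟩ | ⟨h₁, h₂, h₃⟩ <;>
    rcases hE with ⟨e₁, e₂ | e₂⟩ | ⟨e₁, e₂ | e₂⟩ | ⟨e₁, e₂⟩ | ⟨e₁, e₂⟩ <;> linarith

theorem orient_pos_pos_or_neg_or_neg {z : ℝ × ℝ} (hp : 0 < orient u w p)
    (hwp : z ∉ segment ℝ w p) (hup : z ∉ segment ℝ u p) (hz : 0 ≤ orient u w z) :
    (0 < orient w p z ∧ 0 < orient p u z) ∨ orient w p z < 0 ∨ orient p u z < 0 := by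
  have hsum := orient_barycentric_sum u w p z
  have hvec := orient_barycentric_smul u w p z
  rcases lt_trichotomy (orient w p z) 0 with hg | hg | hg
  · exact Or.inr (Or.inl hg)
  · refine Or.inr (Or.inr (not_le.1 fun hh => hwp ?_))
    rw [hg, zero_smul, zero_add] at hvec
    exact mem_segment_of_smul_add_smul_eq hh hz hp (by linarith) hvec
  · rcases lt_trichotomy (orient p u z) 0 with hh | hh | hh
    · exact Or.inr (Or.inr hh)
    · rw [hh, zero_smul, add_zero] at hvec
      exact absurd (mem_segment_of_smul_add_smul_eq hg.le hz hp (by linarith) hvec) hup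
    · exact Or.inl ⟨hg, hh⟩

theorem mem_quadInterior_or_mem_quadExterior {z : ℝ × ℝ} (hp : 0 < orient u w p)
    (hq : orient u w q < 0) (hz : ∀ a ∈ ({u, w} : Set _), ∀ b ∈ ({p, q} : Set _),
      z ∉ segment ℝ a b) :
    z ∈ quadInterior u w p q ∨ z ∈ quadExterior u w p q := by
  have hzp := orient_pos_pos_or_neg_or_neg (z := z) hp
    (hz w (by simp) p (by simp)) (hz u (by simp) p (by simp))
  rcases lt_trichotomy (orient u w z) 0 with hf | hf | hf
  · have hzq := orient_pos_pos_or_neg_or_neg (u := w) (w := u) (p := q) (z := z)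
      (by rw [orient_swap]; linarith) (hz u (by simp) q (by simp)) (hz w (by simp) q (by simp))
      (by rw [orient_swap]; linarith)
    rw [orient_swap q u, orient_swap w q] at hzq
    rcases hzq with ⟨h₁, h₂⟩ | h | h
    · exact Or.inl (Or.inr ⟨hf, by linarith, by linarith⟩)
    · exact Or.inr (Or.inr (Or.inl ⟨hf, Or.inr (by linarith)⟩))
    · exact Or.inr (Or.inr (Or.inl ⟨hf, Or.inl (by linarith)⟩))
  · -- on the line `u w`, the coordinates with respect to `q` are those w.r.t. `p`, rescaled
    obtain ⟨hg, hh⟩ := orient_mul_orient_eq_of_orient_eq_zero u w p q z hf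
    rcases hzp hf.ge with ⟨h₁, h₂⟩ | h | h
    · refine Or.inl (Or.inl ⟨h₁, h₂, Or.inr ⟨?_, ?_⟩⟩)
      · exact neg_of_mul_neg_right (hg ▸ mul_neg_of_neg_of_pos hq h₁) hp.le
      · exact neg_of_mul_neg_right (hh ▸ mul_neg_of_neg_of_pos hq h₂) hp.le
    · exact Or.inr (Or.inr (Or.inr (Or.inl
        ⟨h, pos_of_mul_pos_right (hg ▸ mul_pos_of_neg_of_neg hq h) hp.le⟩)))
    · exact Or.inr (Or.inr (Or.inr (Or.inr
        ⟨h, pos_of_mul_pos_right (hh ▸ mul_pos_of_neg_of_neg hq h) hp.le⟩)))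
  · rcases hzp hf.le with ⟨h₁, h₂⟩ | h | h
    · exact Or.inl (Or.inl ⟨h₁, h₂, Or.inl hf⟩)
    · exact Or.inr (Or.inl ⟨hf, Or.inl h⟩)
    · exact Or.inr (Or.inl ⟨hf, Or.inr h⟩)

theorem openSegment_subset_quadInterior (hp : 0 < orient u w p) (hq : orient u w q < 0) :
    openSegment ℝ u w ⊆ quadInterior u w p q := by
  rintro _ ⟨s, t, hs, ht, hst, rfl⟩
  have hwp : orient w p u = orient u w p := (orient_rotate _ _ _).symm
  have hpu : orient p u w = orient u w p := orient_rotate _ _ _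
  have hwq : orient w q u = orient u w q := (orient_rotate _ _ _).symm
  have hqu : orient q u w = orient u w q := orient_rotate _ _ _
  simp only [quadInterior, mem_ofPred_eq, orient_smul_add_smul _ _ _ _ hst, orient_self_left,
    orient_self_right, hwp, hpu, hwq, hqu, mul_zero, add_zero, zero_add]
  exact Or.inl ⟨mul_pos hs hp, mul_pos ht hp, Or.inr ⟨mul_neg_of_pos_of_neg hs hq,
    mul_neg_of_pos_of_neg ht hq⟩⟩

theorem IsPreconnected.subset_quadInterior {O : Set (ℝ × ℝ)} (hO : IsPreconnected O)
    (hp : 0 < orient u w p) (hq : orient u w q < 0) (hside : AvoidsSegments O {u, w} {p, q})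
    (huw : (O ∩ openSegment ℝ u w).Nonempty) : O ⊆ quadInterior u w p q :=
  hO.subset_left_of_subset_union isOpen_quadInterior isOpen_quadExterior
    disjoint_quadInterior_quadExterior
    (fun _ hz => mem_quadInterior_or_mem_quadExterior hp hq
      fun a ha b hb => disjoint_left.1 (hside a ha b hb) hz)
    (huw.mono (inter_subset_inter_right _ (openSegment_subset_quadInterior hp hq)))

end Quadrilateral

theorem oppSide_of_mem_openSegment {u w p q z : ℝ × ℝ} (hz : z ∈ openSegment ℝ p q)
    (hw : 0 < orient w p z) (hu : 0 < orient p u z) : OppSide p q u w := by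
  obtain ⟨s, t, hs, ht, hst, rfl⟩ := hz
  simp only [orient_smul_add_smul _ _ _ _ hst, orient_self_left, orient_self_right, mul_zero,
    zero_add] at hw hu
  have hu' : orient p q u = -orient p u q := by unfold orient; ring
  have hw' : orient p q w = orient w p q := by unfold orient; ring
  rw [OppSide, hu', hw']
  exact mul_neg_of_neg_of_pos (neg_neg_of_pos (pos_of_mul_pos_right hu ht.le))
    (pos_of_mul_pos_right hw ht.le)

section Obstacle

variable {O : Set (ℝ × ℝ)} {u w p q r : ℝ × ℝ}

/-- Geometrically: the quadrilateral `u p w q` is not a dart. -/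
theorem IsPreconnected.oppSide_of_oppSide (hO : IsPreconnected O)
    (hside : AvoidsSegments O {u, w} {p, q}) (huw : (O ∩ openSegment ℝ u w).Nonempty)
    (hpq : (O ∩ openSegment ℝ p q).Nonempty) (h : OppSide u w p q) : OppSide p q u w := by
  wlog hp : 0 < orient u w p generalizing p q
  · have hq : 0 < orient u w q := pos_of_mul_neg_right h (not_lt.1 hp)
    exact (this (pair_comm p q ▸ hside) (openSegment_symm ℝ p q ▸ hpq) h.symm hq).swap
  have hq : orient u w q < 0 := neg_of_mul_neg_right h hp.le
  obtain ⟨c, hcO, hc⟩ := hpq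
  rcases hO.subset_quadInterior hp hq hside huw hcO with ⟨h₁, h₂, -⟩ | ⟨-, h₁, h₂⟩
  · exact oppSide_of_mem_openSegment hc h₁ h₂
  · refine (oppSide_of_mem_openSegment (u := w) (w := u) (openSegment_symm ℝ p q ▸ hc)
      ?_ ?_).swap.symm <;> rw [orient_swap] <;> linarith

theorem IsPreconnected.sameSide_of_sameSide (hO : IsPreconnected O)
    (hside : AvoidsSegments O {u, w} {p, q}) (huw : (O ∩ openSegment ℝ u w).Nonempty)
    (hpq : (O ∩ openSegment ℝ p q).Nonempty) (h : SameSide u w p q) (hu : orient p q u ≠ 0)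
    (hw : orient p q w ≠ 0) : SameSide p q u w :=
  sameSide_of_not_oppSide hu hw fun h' =>
    h.not_oppSide (hO.oppSide_of_oppSide hside.symm hpq huw h')

theorem IsPreconnected.not_sameSide_of_oppSide (hO : IsPreconnected O)
    (hside : AvoidsSegments O {u, w} {p, q, r}) (huw : (O ∩ openSegment ℝ u w).Nonempty)
    (hpr : (O ∩ openSegment ℝ p r).Nonempty) (hpq : OppSide u w p q) : ¬SameSide u w p r := by
  intro hpr'
  wlog hp : 0 < orient u w p generalizing u w
  · refine this (pair_comm u w ▸ hside) (openSegment_symm ℝ u w ▸ huw) hpq.swap hpr'.swap ?_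
    rw [orient_swap]
    exact neg_pos.2 ((not_lt.1 hp).lt_of_ne (left_ne_zero_of_mul hpq.ne))
  have hq : orient u w q < 0 := neg_of_mul_neg_right hpq hp.le
  have hr : 0 < orient u w r := pos_of_mul_pos_right hpr' hp.le
  have hsub := hO.subset_quadInterior hp hq (hside.mono subset_rfl (by simp [insert_subset_iff]))
    huw
  obtain ⟨e, heO, he⟩ := id hpr
  rcases hsub heO with ⟨h₁, h₂, -⟩ | ⟨hf, -, -⟩
  · exact hpr'.not_oppSide (hO.oppSide_of_oppSide (hside.symm.mono (by simp [insert_subset_iff])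
      subset_rfl) hpr huw (oppSide_of_mem_openSegment he h₁ h₂))
  · obtain ⟨s, t, hs, ht, hst, rfl⟩ := he
    rw [orient_smul_add_smul _ _ _ _ hst] at hf
    linarith [mul_pos hs hp, mul_pos ht hr]

theorem IsPreconnected.sameSide_of_blocks (hO : IsPreconnected O)
    (hside : AvoidsSegments O {u, w} {p, q, r}) (huw : (O ∩ openSegment ℝ u w).Nonempty)
    (hpr : (O ∩ openSegment ℝ p r).Nonempty) (hqr : (O ∩ openSegment ℝ q r).Nonempty)
    (hp : orient u w p ≠ 0) (hq : orient u w q ≠ 0) (hr : orient u w r ≠ 0) :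
    SameSide u w p q := by
  refine sameSide_of_not_oppSide hp hq fun hpq => ?_
  rcases (mul_ne_zero hp hr).lt_or_gt with hpr' | hpr'
  · refine hO.not_sameSide_of_oppSide (insert_comm p q {r} ▸ hside) huw hqr hpq.symm ?_
    unfold SameSide
    nlinarith [mul_pos_of_neg_of_neg hpq hpr', mul_self_pos.2 hp]
  · exact hO.not_sameSide_of_oppSide hside huw hpr hpq hpr'

theorem IsPreconnected.sameSide_of_K23 {a : Fin 2 → ℝ × ℝ} {b : Fin 3 → ℝ × ℝ}
    (hO : IsPreconnected O) (hside : AvoidsSegments O (range a) (range b))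
    (ha : (O ∩ openSegment ℝ (a 0) (a 1)).Nonempty)
    (hb : ∀ {j k}, j ≠ k → (O ∩ openSegment ℝ (b j) (b k)).Nonempty)
    (hgen : ∀ j, orient (a 0) (a 1) (b j) ≠ 0) (j k : Fin 3) :
    SameSide (a 0) (a 1) (b j) (b k) := by
  rcases eq_or_ne j k with rfl | hjk
  · exact sameSide_self (hgen j)
  obtain ⟨m, hjm, hkm⟩ : ∃ m, j ≠ m ∧ k ≠ m := by revert j k; decide
  exact hO.sameSide_of_blocks (hside.mono (by simp [insert_subset_iff])
    (by simp [insert_subset_iff])) ha (hb hjm) (hb hkm) (hgen j) (hgen k) (hgen m)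

end Obstacle

theorem ObstacleRep.obs_zero_blocks {V : Type*} {G : SimpleGraph V} (rep : ObstacleRep G 1)
    {p q : V} (hpq : p ≠ q) (hadj : ¬G.Adj p q) :
    (rep.obs 0 ∩ openSegment ℝ (rep.v p) (rep.v q)).Nonempty := by
  obtain ⟨i, hi⟩ := rep.blocks p q hpq hadj
  rwa [Subsingleton.elim i 0] at hi

/-- in every 1-obstacle representation of a graph with an induced
`K_{2,3}`, the two parts of the `K_{2,3}` are linearly separable (their convex
hulls are disjoint), and each part induces the same sight ordering of the other. -/
theorem induced_K23_separable_same_sight_orderings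
    {V : Type*} (G : SimpleGraph V) (x : Fin 2 → V) (y : Fin 3 → V)
    (hinj : Function.Injective (Sum.elim x y : Fin 2 ⊕ Fin 3 → V))
    (hxy : ∀ i j, G.Adj (x i) (y j))
    (hxx : ∀ i i', ¬ G.Adj (x i) (x i'))
    (hyy : ∀ j j', ¬ G.Adj (y j) (y j'))
    (rep : ObstacleRep G 1) :
    Disjoint (convexHull ℝ (Set.range fun i => rep.v (x i)))
      (convexHull ℝ (Set.range fun j => rep.v (y j))) ∧
    (∀ i i' : Fin 2, ∀ j j' : Fin 3,
      (SeesLeft (rep.v (x i)) (rep.v (y j)) (rep.v (y j')) ↔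
        SeesLeft (rep.v (x i')) (rep.v (y j)) (rep.v (y j')))) ∧
    (∀ j j' : Fin 3, ∀ i i' : Fin 2,
      (SeesLeft (rep.v (y j)) (rep.v (x i)) (rep.v (x i')) ↔
        SeesLeft (rep.v (y j')) (rep.v (x i)) (rep.v (x i')))) := by
  have hxy_ne i j : x i ≠ y j := hinj.ne Sum.inl_ne_inr
  have hyy_ne {j k} (hjk : j ≠ k) : y j ≠ y k := hinj.ne (Sum.inr_injective.ne hjk)
  have hxx_ne : x 0 ≠ x 1 := hinj.ne (Sum.inl_injective.ne (by decide))
  have hO : IsPreconnected (rep.obs 0) := (rep.obs_connected 0).isPreconnected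
  have hside : AvoidsSegments (rep.obs 0) (range fun i => rep.v (x i))
      (range fun j => rep.v (y j)) := by
    rintro _ ⟨i, rfl⟩ _ ⟨j, rfl⟩
    exact rep.obs_avoid_edges 0 _ _ (hxy i j)
  have hx := rep.obs_zero_blocks hxx_ne (hxx 0 1)
  have hy {j k} (hjk : j ≠ k) := rep.obs_zero_blocks (hyy_ne hjk) (hyy j k)
  have hA := hO.sameSide_of_K23 hside hx hy fun j =>
    rep.genpos.orient_ne_zero hxx_ne (hxy_ne 0 j) (hxy_ne 1 j)
  refine ⟨disjoint_convexHull_of_sameSide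
    (forall_mem_range.2 (Fin.forall_fin_two.2 ⟨orient_self_left _ _, orient_self_right _ _⟩))
    (forall_mem_range.2 fun j => forall_mem_range.2 (hA j)), fun i i' j k => ?_,
    fun j k => (hA j k).seesLeft_fin_two_iff⟩
  rcases eq_or_ne j k with rfl | hjk
  · simp [seesLeft_iff_orient_neg, orient_self_right]
  have hgen i := rep.genpos.orient_ne_zero (hyy_ne hjk) (hxy_ne i j).symm (hxy_ne i k).symm
  exact SameSide.fin_two_seesLeft_iff (a := fun i => rep.v (x i))
    (hO.sameSide_of_sameSide (hside.mono (by simp [insert_subset_iff])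
      (by simp [insert_subset_iff])) hx (hy hjk) (hA j k) (hgen 0) (hgen 1)) i i'
end

section
/- In every 1-obstacle representation v of K*_{5,5}, every vertex x is linearly separable from the set of its neighbors: the point v(x) does not lie in the convex hull of the images of the neighbors of x (hence x induces an x-sight ordering on its neighbor set). -/
open Set

/-- `K*_{m,n}`: the complete bipartite graph `K_{m,n}` minus a maximum matching.
`b i = Sum.inl i` is adjacent to `r j = Sum.inr j` iff `i ≠ j` (as naturals). -/
def KStarGraph (m n : ℕ) : SimpleGraph (Fin m ⊕ Fin n) where
  Adj x y := match x, y with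
    | Sum.inl i, Sum.inr j => (i : ℕ) ≠ (j : ℕ)
    | Sum.inr j, Sum.inl i => (i : ℕ) ≠ (j : ℕ)
    | _, _ => False
  symm := by constructor; rintro (i|i) (j|j) h <;> simp_all
  loopless := by constructor; rintro (i|i) h <;> simp_all

/-!
By Carathéodory, `v x` would lie in a triangle `v a, v b, v c` of three neighbours of `x`. These
are pairwise non-adjacent, and since each side of `K*_{5,5}` has five vertices there is a vertex
`y ≠ x`, not adjacent to `x`, adjacent to `a, b, c`. So the connected obstacle `O` meets the open
segments `xy, ab, bc, ca` and misses the six segments from `x` and `y` to `a, b, c`.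

As `x` is inside the triangle, the ray from `x` through `y` lies in one of the open angles at `x`
cut out by `xa, xb, xc`, say in `∠axb`. Then `P = conv {x, y, a} ∪ conv {x, y, b}` contains the
open diagonal `(x, y)` in its interior and has its frontier on `xa, ya, xb, yb`, so connectedness
forces `O ⊆ P`. But `P` lies on the side of the line `xa` containing `b`, and the open side
`(a, c)` lies strictly on the other side.
-/

open Module

theorem IsPreconnected.subset_interior_of_disjoint_frontier {X : Type*} [TopologicalSpace X]
    {s t : Set X} (hs : IsPreconnected s) (hst : Disjoint s (frontier t))
    (hne : (s ∩ interior t).Nonempty) : s ⊆ interior t := by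
  refine hs.subset_of_closure_inter_subset isOpen_interior hne ?_
  rintro z ⟨hzc, hzs⟩
  by_contra hzi
  exact hst.notMem_of_mem_left hzs ⟨closure_mono interior_subset hzc, hzi⟩

section Module

variable {𝕜 E F : Type*} [AddCommGroup E] [AddCommGroup F]

section Ring

variable [Ring 𝕜] [Module 𝕜 E] [Module 𝕜 F]

theorem AffineMap.linear_sub (f : E →ᵃ[𝕜] F) (p q : E) : f.linear (p - q) = f p - f q :=
  f.linearMap_vsub p q

theorem AffineMap.apply_sub_eq_of_sub_eq (f : E →ᵃ[𝕜] 𝕜) {x y a b : E} {s t : 𝕜}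
    (h : y - x = s • (a - x) + t • (b - x)) :
    f y - f x = s * (f a - f x) + t * (f b - f x) := by
  simpa [f.linear_sub] using congrArg f.linear h

theorem AffineBasis.sub_eq_sum_coord_smul_sub {ι : Type*} [Fintype ι] (b : AffineBasis ι 𝕜 E)
    (z w : E) : z - w = ∑ i, b.coord i z • (b i - w) := by
  simp only [smul_sub, Finset.sum_sub_distrib, ← Finset.sum_smul, b.sum_coord_apply_eq_one,
    one_smul, b.linear_combination_coord_eq_self]

end Ring

theorem collinear_of_sub_eq_smul [DivisionRing 𝕜] [Module 𝕜 E] {x y b : E} {t : 𝕜}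
    (h : y - x = t • (b - x)) : Collinear 𝕜 ({x, y, b} : Set E) := by
  rw [collinear_iff_of_mem (mem_insert x _)]
  refine ⟨b - x, ?_⟩
  rintro p (rfl | rfl | rfl)
  · exact ⟨0, by simp⟩
  · exact ⟨t, by rw [vadd_eq_add, ← h, sub_add_cancel]⟩
  · exact ⟨1, by simp⟩

theorem exists_nonneg_sector [Field 𝕜] [LinearOrder 𝕜] [IsStrictOrderedRing 𝕜] [Module 𝕜 E]
    {u v w z : E} {α β γ p q r : 𝕜} (hα : 0 < α) (hβ : 0 < β) (hγ : 0 < γ)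
    (h0 : α • u + β • v + γ • w = 0) (hz : z = p • u + q • v + r • w) :
    ∃ s t : 𝕜, 0 ≤ s ∧ 0 ≤ t ∧ (z = s • u + t • v ∨ z = s • v + t • w ∨ z = s • w + t • u) := by
  set ρ := min (p / α) (min (q / β) (r / γ))
  have hz' : z = (p - ρ * α) • u + (q - ρ * β) • v + (r - ρ * γ) • w := by
    rw [hz]
    linear_combination (norm := module) ρ • h0
  have hu : ρ * α ≤ p := (le_div_iff₀ hα).1 (min_le_left _ _)
  have hv : ρ * β ≤ q := (le_div_iff₀ hβ).1 ((min_le_right _ _).trans (min_le_left _ _))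
  have hw : ρ * γ ≤ r := (le_div_iff₀ hγ).1 ((min_le_right _ _).trans (min_le_right _ _))
  rcases min_choice (p / α) (min (q / β) (r / γ)) with hρ | hρ
  · have : p - ρ * α = 0 := by
      rw [show ρ = p / α from hρ, div_mul_cancel₀ _ hα.ne', sub_self]
    exact ⟨_, _, sub_nonneg.2 hv, sub_nonneg.2 hw, Or.inr (Or.inl (by rw [hz', this]; module))⟩
  rcases min_choice (q / β) (r / γ) with hρ' | hρ'
  · have : q - ρ * β = 0 := by
      rw [show ρ = q / β from hρ.trans hρ', div_mul_cancel₀ _ hβ.ne', sub_self]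
    exact ⟨_, _, sub_nonneg.2 hw, sub_nonneg.2 hu, Or.inr (Or.inr (by rw [hz', this]; module))⟩
  · have : r - ρ * γ = 0 := by
      rw [show ρ = r / γ from hρ.trans hρ', div_mul_cancel₀ _ hγ.ne', sub_self]
    exact ⟨_, _, sub_nonneg.2 hu, sub_nonneg.2 hv, Or.inl (by rw [hz', this]; module)⟩

end Module

section Plane

attribute [local instance] FiniteDimensional.of_fact_finrank_eq_two

variable {E : Type*} [NormedAddCommGroup E] [NormedSpace ℝ E] [Fact (finrank ℝ E = 2)]
  {p q r : E}

def triangleBasis (h : ¬Collinear ℝ ({p, q, r} : Set E)) : AffineBasis (Fin 3) ℝ E :=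
  ⟨![p, q, r], affineIndependent_iff_not_collinear_set.2 h,
    (affineIndependent_iff_not_collinear_set.2 h).affineSpan_eq_top_iff_card_eq_finrank_add_one.2
      (by simp [(Fact.out : finrank ℝ E = 2)])⟩

@[simp] theorem coe_triangleBasis (h : ¬Collinear ℝ ({p, q, r} : Set E)) :
    ⇑(triangleBasis h) = ![p, q, r] :=
  rfl

theorem range_triangleBasis (h : ¬Collinear ℝ ({p, q, r} : Set E)) :
    range (triangleBasis h) = {p, q, r} := by
  ext; simp [eq_comm]; tauto

@[simp] theorem triangleBasis_coord_apply_zero (h : ¬Collinear ℝ ({p, q, r} : Set E))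
    (i : Fin 3) :
    (triangleBasis h).coord i p = if i = 0 then 1 else 0 :=
  (triangleBasis h).coord_apply i 0

@[simp] theorem triangleBasis_coord_apply_one (h : ¬Collinear ℝ ({p, q, r} : Set E))
    (i : Fin 3) :
    (triangleBasis h).coord i q = if i = 1 then 1 else 0 :=
  (triangleBasis h).coord_apply i 1

@[simp] theorem triangleBasis_coord_apply_two (h : ¬Collinear ℝ ({p, q, r} : Set E))
    (i : Fin 3) :
    (triangleBasis h).coord i r = if i = 2 then 1 else 0 :=
  (triangleBasis h).coord_apply i 2

theorem mem_convexHull_triple_iff (h : ¬Collinear ℝ ({p, q, r} : Set E)) {z : E} :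
    z ∈ convexHull ℝ {p, q, r} ↔ ∀ i, 0 ≤ (triangleBasis h).coord i z := by
  rw [← range_triangleBasis h, (triangleBasis h).convexHull_eq_nonneg_coord]; rfl

theorem mem_interior_convexHull_triple_iff (h : ¬Collinear ℝ ({p, q, r} : Set E)) {z : E} :
    z ∈ interior (convexHull ℝ {p, q, r}) ↔ ∀ i, 0 < (triangleBasis h).coord i z := by
  rw [← range_triangleBasis h, AffineBasis.interior_convexHull]; rfl

theorem frontier_convexHull_triple_subset (h : ¬Collinear ℝ ({p, q, r} : Set E)) :
    frontier (convexHull ℝ {p, q, r}) ⊆ segment ℝ p q ∪ segment ℝ q r ∪ segment ℝ r p := by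
  intro z hz
  rw [((toFinite _).isClosed_convexHull (𝕜 := ℝ)).frontier_eq, mem_sdiff,
    mem_convexHull_triple_iff h, mem_interior_convexHull_triple_iff h] at hz
  obtain ⟨hz, hzi⟩ := hz
  push Not at hzi
  obtain ⟨i, hi⟩ := hzi
  have hzero : (triangleBasis h).coord i z = 0 := le_antisymm hi (hz i)
  have hsum := (triangleBasis h).sum_coord_apply_eq_one z
  have hcomb := (triangleBasis h).linear_combination_coord_eq_self z
  simp only [Fin.sum_univ_three, coe_triangleBasis] at hsum hcomb
  obtain rfl | rfl | rfl : i = 0 ∨ i = 1 ∨ i = 2 := by fin_cases i <;> simp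
  · refine Or.inl (Or.inr ⟨_, _, hz 1, hz 2, by simp_all, by simpa [hzero] using hcomb⟩)
  · refine Or.inr ⟨_, _, hz 2, hz 0, by simp_all; linarith, ?_⟩
    simpa [hzero, add_comm] using hcomb
  · refine Or.inl (Or.inl ⟨_, _, hz 0, hz 1, by simp_all, by simpa [hzero] using hcomb⟩)

theorem triangleBasis_sub_eq (h : ¬Collinear ℝ ({p, q, r} : Set E)) (z : E) :
    z - p = (triangleBasis h).coord 1 z • (q - p) + (triangleBasis h).coord 2 z • (r - p) := by
  simpa [Fin.sum_univ_three] using (triangleBasis h).sub_eq_sum_coord_smul_sub z p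

variable {x y a b : E} {s t : ℝ}

theorem openSegment_subset_interior_convexHull_union (hxya : ¬Collinear ℝ ({x, y, a} : Set E))
    (hxyb : ¬Collinear ℝ ({x, y, b} : Set E)) (hs : 0 < s) (ht : 0 < t)
    (hy : y - x = s • (a - x) + t • (b - x)) :
    openSegment ℝ x y ⊆ interior (convexHull ℝ {x, y, a} ∪ convexHull ℝ {x, y, b}) := by
  set A := triangleBasis hxya
  set B := triangleBasis hxyb
  -- `B.coord 2` vanishes on the line `xy`, so it is a negative multiple of `A.coord 2`.
  have hBa : B.coord 2 a < 0 := by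
    have := (B.coord 2).apply_sub_eq_of_sub_eq hy
    simp [B] at this
    nlinarith
  have hBA (z : E) : B.coord 2 z = A.coord 2 z * B.coord 2 a := by
    simpa [A, B] using (B.coord 2).apply_sub_eq_of_sub_eq (triangleBasis_sub_eq hxya z)
  set N := {z | 0 < A.coord 0 z} ∩ {z | 0 < A.coord 1 z} ∩
    ({z | 0 < B.coord 0 z} ∩ {z | 0 < B.coord 1 z})
  have hNopen : IsOpen N := by
    have hopen (C : AffineBasis (Fin 3) ℝ E) (i : Fin 3) : IsOpen {z | 0 < C.coord i z} :=
      isOpen_lt continuous_const (continuous_barycentric_coord C i)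
    exact ((hopen A 0).inter (hopen A 1)).inter ((hopen B 0).inter (hopen B 1))
  have hNP : N ⊆ convexHull ℝ {x, y, a} ∪ convexHull ℝ {x, y, b} := by
    rintro z ⟨⟨hA0, hA1⟩, hB0, hB1⟩
    by_cases hA2 : 0 ≤ A.coord 2 z
    · refine Or.inl ((mem_convexHull_triple_iff hxya).2 fun i => ?_)
      fin_cases i
      exacts [hA0.le, hA1.le, hA2]
    · have hB2 : 0 ≤ B.coord 2 z := by rw [hBA]; nlinarith
      refine Or.inr ((mem_convexHull_triple_iff hxyb).2 fun i => ?_)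
      fin_cases i
      exacts [hB0.le, hB1.le, hB2]
  rintro _ ⟨θ₀, θ₁, hθ₀, hθ₁, hθ, rfl⟩
  refine interior_maximal hNP hNopen ?_
  simp [N, Convex.combo_affine_apply hθ, A, B, hθ₀, hθ₁]

theorem frontier_convexHull_union_subset (hxya : ¬Collinear ℝ ({x, y, a} : Set E))
    (hxyb : ¬Collinear ℝ ({x, y, b} : Set E)) (hs : 0 < s) (ht : 0 < t)
    (hy : y - x = s • (a - x) + t • (b - x)) :
    frontier (convexHull ℝ {x, y, a} ∪ convexHull ℝ {x, y, b}) ⊆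
      segment ℝ x a ∪ segment ℝ y a ∪ (segment ℝ x b ∪ segment ℝ y b) := by
  have edge {c : E} (hc : ¬Collinear ℝ ({x, y, c} : Set E)) {z : E}
      (hz : z ∈ frontier (convexHull ℝ {x, y, c})) (hxy : z ∉ openSegment ℝ x y) :
      z ∈ segment ℝ x c ∪ segment ℝ y c := by
    rcases frontier_convexHull_triple_subset hc hz with (hz | hz) | hz
    · rw [← insert_endpoints_openSegment] at hz
      rcases hz with rfl | rfl | hz
      exacts [Or.inl (left_mem_segment ℝ _ _), Or.inr (left_mem_segment ℝ _ _), absurd hz hxy]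
    · exact Or.inr hz
    · exact Or.inl (segment_symm ℝ c x ▸ hz)
  intro z hz
  have hxy : z ∉ openSegment ℝ x y := fun h =>
    hz.2 (openSegment_subset_interior_convexHull_union hxya hxyb hs ht hy h)
  rcases frontier_union_subset _ _ hz with ⟨hza, -⟩ | ⟨-, hzb⟩
  exacts [Or.inl (edge hxya hza hxy), Or.inr (edge hxyb hzb hxy)]

theorem IsPreconnected.subset_convexHull_union_of_sector {O : Set E} (hO : IsPreconnected O)
    (hxa : Disjoint O (segment ℝ x a)) (hya : Disjoint O (segment ℝ y a))
    (hxb : Disjoint O (segment ℝ x b)) (hyb : Disjoint O (segment ℝ y b))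
    (hxya : ¬Collinear ℝ ({x, y, a} : Set E)) (hxyb : ¬Collinear ℝ ({x, y, b} : Set E))
    (hs : 0 < s) (ht : 0 < t) (hy : y - x = s • (a - x) + t • (b - x))
    (hxy : (O ∩ openSegment ℝ x y).Nonempty) :
    O ⊆ convexHull ℝ {x, y, a} ∪ convexHull ℝ {x, y, b} := by
  refine (hO.subset_interior_of_disjoint_frontier ?_ ?_).trans interior_subset
  · refine Disjoint.mono_right (frontier_convexHull_union_subset hxya hxyb hs ht hy) ?_
    simp only [disjoint_union_right]
    exact ⟨⟨hxa, hya⟩, hxb, hyb⟩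
  · obtain ⟨q, hqO, hq⟩ := hxy
    exact ⟨q, hqO, openSegment_subset_interior_convexHull_union hxya hxyb hs ht hy hq⟩

theorem IsPreconnected.false_of_sector {O : Set E} (hO : IsPreconnected O)
    (hxa : Disjoint O (segment ℝ x a)) (hya : Disjoint O (segment ℝ y a))
    (hxb : Disjoint O (segment ℝ x b)) (hyb : Disjoint O (segment ℝ y b))
    (hxya : ¬Collinear ℝ ({x, y, a} : Set E)) (hxyb : ¬Collinear ℝ ({x, y, b} : Set E))
    (hs : 0 ≤ s) (ht : 0 ≤ t) (hy : y - x = s • (a - x) + t • (b - x))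
    {c : E} {α β γ : ℝ} (hβ : 0 < β) (hγ : 0 < γ)
    (hx : α • (a - x) + β • (b - x) + γ • (c - x) = 0)
    (hxy : (O ∩ openSegment ℝ x y).Nonempty) (hac : (O ∩ openSegment ℝ a c).Nonempty) :
    False := by
  have hs : 0 < s := hs.lt_of_ne' fun h => hxyb (collinear_of_sub_eq_smul (by simpa [h] using hy))
  have ht : 0 < t := ht.lt_of_ne' fun h => hxya (collinear_of_sub_eq_smul (by simpa [h] using hy))
  -- an affine function vanishing on the line `xa`
  set ℓ := (triangleBasis hxya).coord 1
  have hℓb : 0 < ℓ b := by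
    have := ℓ.apply_sub_eq_of_sub_eq hy
    simp [ℓ] at this
    exact pos_of_mul_pos_right (this ▸ one_pos) ht.le
  have hℓc : ℓ c < 0 := by
    have := congrArg ℓ.linear hx
    simp only [map_add, map_smul, map_zero, ℓ.linear_sub, smul_eq_mul] at this
    simp [ℓ] at this
    nlinarith
  have hP : convexHull ℝ {x, y, a} ∪ convexHull ℝ {x, y, b} ⊆ {z | 0 ≤ ℓ z} := by
    have hconv : Convex ℝ {z | 0 ≤ ℓ z} := (convex_Ici 0).affine_preimage ℓ
    refine union_subset (convexHull_min ?_ hconv) (convexHull_min ?_ hconv) <;>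
      simp [insert_subset_iff, ℓ, hℓb.le]
  obtain ⟨_, hwO, θ₀, θ₁, hθ₀, hθ₁, hθ, rfl⟩ := hac
  have := hP (hO.subset_convexHull_union_of_sector hxa hya hxb hyb hxya hxyb hs ht hy hxy hwO)
  simp [Convex.combo_affine_apply hθ, ℓ] at this
  linarith [mul_neg_of_pos_of_neg hθ₁ hℓc]

theorem IsPreconnected.notMem_convexHull_of_blocking {O : Set E} (hO : IsPreconnected O)
    {c : E} (hxa : Disjoint O (segment ℝ x a)) (hxb : Disjoint O (segment ℝ x b))
    (hxc : Disjoint O (segment ℝ x c)) (hya : Disjoint O (segment ℝ y a))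
    (hyb : Disjoint O (segment ℝ y b)) (hyc : Disjoint O (segment ℝ y c))
    (habc : ¬Collinear ℝ ({a, b, c} : Set E)) (hxab : ¬Collinear ℝ ({x, a, b} : Set E))
    (hxbc : ¬Collinear ℝ ({x, b, c} : Set E)) (hxca : ¬Collinear ℝ ({x, c, a} : Set E))
    (hxya : ¬Collinear ℝ ({x, y, a} : Set E)) (hxyb : ¬Collinear ℝ ({x, y, b} : Set E))
    (hxyc : ¬Collinear ℝ ({x, y, c} : Set E))
    (hxy : (O ∩ openSegment ℝ x y).Nonempty) (hab : (O ∩ openSegment ℝ a b).Nonempty)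
    (hbc : (O ∩ openSegment ℝ b c).Nonempty) (hca : (O ∩ openSegment ℝ c a).Nonempty) :
    x ∉ convexHull ℝ {a, b, c} := by
  intro hx
  set T := triangleBasis habc
  have hxT : x ∈ interior (convexHull ℝ {a, b, c}) := by
    by_contra hxi
    rcases frontier_convexHull_triple_subset habc ⟨subset_closure hx, hxi⟩ with (h | h) | h
    · exact hxab (insert_comm a x {b} ▸ (mem_segment_iff_wbtw.1 h).collinear)
    · exact hxbc (insert_comm b x {c} ▸ (mem_segment_iff_wbtw.1 h).collinear)
    · exact hxca (insert_comm c x {a} ▸ (mem_segment_iff_wbtw.1 h).collinear)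
  rw [mem_interior_convexHull_triple_iff habc] at hxT
  have h0 : T.coord 0 x • (a - x) + T.coord 1 x • (b - x) + T.coord 2 x • (c - x) = 0 := by
    simpa [Fin.sum_univ_three, T] using (T.sub_eq_sum_coord_smul_sub x x).symm
  have hy :
      y - x = T.coord 0 y • (a - x) + T.coord 1 y • (b - x) + T.coord 2 y • (c - x) := by
    simpa [Fin.sum_univ_three, T] using T.sub_eq_sum_coord_smul_sub y x
  obtain ⟨s, t, hs, ht, hy | hy | hy⟩ := exists_nonneg_sector (hxT 0) (hxT 1) (hxT 2) h0 hy
  · exact hO.false_of_sector hxa hya hxb hyb hxya hxyb hs ht hy (hxT 1) (hxT 2) h0 hxy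
      (by rwa [openSegment_symm])
  · exact hO.false_of_sector (c := a) hxb hyb hxc hyc hxyb hxyc hs ht hy (hxT 2) (hxT 0)
      (by rw [← h0]; abel) hxy (by rwa [openSegment_symm])
  · exact hO.false_of_sector (c := b) hxc hyc hxa hya hxyc hxya hs ht hy (hxT 0) (hxT 1)
      (by rw [← h0]; abel) hxy (by rwa [openSegment_symm])

end Plane

section Caratheodory

variable {𝕜 E : Type*} [Field 𝕜] [LinearOrder 𝕜] [IsStrictOrderedRing 𝕜] [AddCommGroup E]
  [Module 𝕜 E] [FiniteDimensional 𝕜 E]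

theorem exists_subset_encard_eq_mem_convexHull {S : Set E} {x : E} (hx : x ∈ convexHull 𝕜 S)
    (hS : (finrank 𝕜 E + 1 : ℕ∞) ≤ S.encard) :
    ∃ t ⊆ S, t.encard = finrank 𝕜 E + 1 ∧ x ∈ convexHull 𝕜 t := by
  rw [convexHull_eq_union] at hx
  simp only [mem_iUnion] at hx
  obtain ⟨u, huS, hu, hxu⟩ := hx
  have hu_card : (u : Set E).encard ≤ finrank 𝕜 E + 1 := by
    have := hu.card_le_finrank_succ.trans (Nat.add_le_add_right (Submodule.finrank_le _) 1)
    rw [encard_coe_eq_coe_finsetCard]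
    exact_mod_cast (by simpa using this)
  obtain ⟨t, hut, htS, ht⟩ := exists_superset_subset_encard_eq huS hu_card hS
  exact ⟨t, htS, ht, convexHull_mono hut hxu⟩

end Caratheodory

theorem exists_fin_val_notMem {n : ℕ} (s : Finset ℕ) (h : s.card < n) :
    ∃ j : Fin n, ↑j ∉ s := by
  obtain ⟨j, hj, hjs⟩ :=
    Finset.exists_mem_notMem_of_card_lt_card (t := Finset.range n) (by simpa using h)
  exact ⟨⟨j, Finset.mem_range.1 hj⟩, hjs⟩

namespace KStarGraph

variable {m n : ℕ}

theorem not_adj_of_adj_of_adj {x a b : Fin m ⊕ Fin n} (ha : (KStarGraph m n).Adj x a)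
    (hb : (KStarGraph m n).Adj x b) : ¬(KStarGraph m n).Adj a b := by
  rcases x with x | x <;> rcases a with a | a <;> rcases b with b | b <;> simp_all [KStarGraph]

theorem three_le_encard_neighborSet (hm : 4 ≤ m) (hn : 4 ≤ n) (x : Fin m ⊕ Fin n) :
    3 ≤ ((KStarGraph m n).neighborSet x).encard := by
  have fresh {k : ℕ} (hk : 4 ≤ k) (i : ℕ) :
      ∃ j₁ j₂ j₃ : Fin k, ↑j₁ ≠ i ∧ ↑j₂ ≠ i ∧ ↑j₃ ≠ i ∧ j₁ ≠ j₂ ∧ j₁ ≠ j₃ ∧ j₂ ≠ j₃ := by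
    obtain ⟨j₁, h₁⟩ := exists_fin_val_notMem (n := k) {i} (by rw [Finset.card_singleton]; omega)
    obtain ⟨j₂, h₂⟩ := exists_fin_val_notMem (n := k) {i, ↑j₁}
      (Finset.card_le_two.trans_lt (by omega))
    obtain ⟨j₃, h₃⟩ := exists_fin_val_notMem (n := k) {i, ↑j₁, ↑j₂}
      (Finset.card_le_three.trans_lt (by omega))
    simp only [Finset.mem_insert, Finset.mem_singleton, not_or] at h₁ h₂ h₃
    exact ⟨j₁, j₂, j₃, h₁, h₂.1, h₃.1, fun h => h₂.2 (congrArg _ h.symm),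
      fun h => h₃.2.1 (congrArg _ h.symm), fun h => h₃.2.2 (congrArg _ h.symm)⟩
  have hsub {s : Set (Fin m ⊕ Fin n)} (hs : s.encard = 3)
      (h : s ⊆ (KStarGraph m n).neighborSet x) : 3 ≤ ((KStarGraph m n).neighborSet x).encard :=
    hs ▸ encard_le_encard h
  rcases x with i | i
  · obtain ⟨j₁, j₂, j₃, h₁, h₂, h₃, h₁₂, h₁₃, h₂₃⟩ := fresh hn i
    refine hsub (s := {.inr j₁, .inr j₂, .inr j₃}) (encard_eq_three.2 ⟨_, _, _, by simpa, by simpa,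
      by simpa, rfl⟩) ?_
    simp [insert_subset_iff, KStarGraph, Ne.symm h₁, Ne.symm h₂, Ne.symm h₃]
  · obtain ⟨j₁, j₂, j₃, h₁, h₂, h₃, h₁₂, h₁₃, h₂₃⟩ := fresh hm i
    refine hsub (s := {.inl j₁, .inl j₂, .inl j₃}) (encard_eq_three.2 ⟨_, _, _, by simpa, by simpa,
      by simpa, rfl⟩) ?_
    simp [insert_subset_iff, KStarGraph, h₁, h₂, h₃]

theorem exists_nonadjacent_common_neighbor (hm : 5 ≤ m) (hn : 5 ≤ n) {x a b c : Fin m ⊕ Fin n}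
    (ha : (KStarGraph m n).Adj x a) (hb : (KStarGraph m n).Adj x b)
    (hc : (KStarGraph m n).Adj x c) :
    ∃ y, x ≠ y ∧ ¬(KStarGraph m n).Adj x y ∧ (KStarGraph m n).Adj y a ∧
      (KStarGraph m n).Adj y b ∧ (KStarGraph m n).Adj y c := by
  rcases x with i | i <;> rcases a with a | a <;> rcases b with b | b <;>
    rcases c with c | c <;> simp only [KStarGraph] at ha hb hc
  · obtain ⟨l, hl⟩ := exists_fin_val_notMem {↑i, ↑a, ↑b, ↑c} (Finset.card_le_four.trans_lt hm)
    simp only [Finset.mem_insert, Finset.mem_singleton, not_or] at hl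
    exact ⟨.inl l, fun h => hl.1 (by rw [Sum.inl_injective h]), by simp [KStarGraph], hl.2.1,
      hl.2.2.1, hl.2.2.2⟩
  · obtain ⟨l, hl⟩ := exists_fin_val_notMem {↑i, ↑a, ↑b, ↑c} (Finset.card_le_four.trans_lt hn)
    simp only [Finset.mem_insert, Finset.mem_singleton, not_or] at hl
    exact ⟨.inr l, fun h => hl.1 (by rw [Sum.inr_injective h]), by simp [KStarGraph],
      Ne.symm hl.2.1, Ne.symm hl.2.2.1, Ne.symm hl.2.2.2⟩

end KStarGraph

theorem ObstacleRep.v_notMem_convexHull {V : Type*} {G : SimpleGraph V} (rep : ObstacleRep G 1)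
    {x y a b c : V} (hxy : x ≠ y) (hnxy : ¬G.Adj x y) (hxa : G.Adj x a) (hxb : G.Adj x b)
    (hxc : G.Adj x c) (hya : G.Adj y a) (hyb : G.Adj y b) (hyc : G.Adj y c) (hab : a ≠ b)
    (hac : a ≠ c) (hbc : b ≠ c) (hnab : ¬G.Adj a b) (hnbc : ¬G.Adj b c) (hnca : ¬G.Adj c a) :
    rep.v x ∉ convexHull ℝ {rep.v a, rep.v b, rep.v c} := by
  have : Fact (finrank ℝ (ℝ × ℝ) = 2) := ⟨by simp⟩
  have meets {p q : V} (hpq : p ≠ q) (h : ¬G.Adj p q) :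
      (rep.obs 0 ∩ openSegment ℝ (rep.v p) (rep.v q)).Nonempty := by
    obtain ⟨i, hi⟩ := rep.blocks p q hpq h
    rwa [Subsingleton.elim i 0] at hi
  have avoid {p q : V} (h : G.Adj p q) := rep.obs_avoid_edges 0 p q h
  exact (rep.obs_connected 0).isPreconnected.notMem_convexHull_of_blocking
    (avoid hxa) (avoid hxb) (avoid hxc) (avoid hya) (avoid hyb) (avoid hyc)
    (rep.genpos a b c hab hac hbc) (rep.genpos x a b hxa.ne hxb.ne hab)
    (rep.genpos x b c hxb.ne hxc.ne hbc) (rep.genpos x c a hxc.ne hxa.ne hac.symm)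
    (rep.genpos x y a hxy hxa.ne hya.ne) (rep.genpos x y b hxy hxb.ne hyb.ne)
    (rep.genpos x y c hxy hxc.ne hyc.ne)
    (meets hxy hnxy) (meets hab hnab) (meets hbc hnbc) (meets hac.symm hnca)

/-- in every 1-obstacle representation of `K*_{5,5}`, every vertex is
linearly separable from its neighbors: its image point is not in the convex hull
of the images of its neighbors. -/
theorem kstar55_vertex_separable_from_neighbors (rep : ObstacleRep (KStarGraph 5 5) 1)
    (x : Fin 5 ⊕ Fin 5) :
    rep.v x ∉ convexHull ℝ (rep.v '' ((KStarGraph 5 5).neighborSet x)) := by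
  intro hx
  have h3 : (finrank ℝ (ℝ × ℝ) + 1 : ℕ∞) = 3 := by simp; norm_num
  have hN : (finrank ℝ (ℝ × ℝ) + 1 : ℕ∞) ≤ (rep.v '' (KStarGraph 5 5).neighborSet x).encard := by
    rw [rep.inj.encard_image, h3]
    exact KStarGraph.three_le_encard_neighborSet (by norm_num) (by norm_num) x
  obtain ⟨t, htN, ht, hxt⟩ := exists_subset_encard_eq_mem_convexHull hx hN
  obtain ⟨_, _, _, hpq, hpr, hqr, rfl⟩ := encard_eq_three.1 (ht.trans h3)
  simp only [insert_subset_iff, singleton_subset_iff] at htN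
  obtain ⟨⟨a, ha, rfl⟩, ⟨b, hb, rfl⟩, ⟨c, hc, rfl⟩⟩ := htN
  obtain ⟨y, hxy, hnxy, hya, hyb, hyc⟩ :=
    KStarGraph.exists_nonadjacent_common_neighbor (by norm_num) (by norm_num) ha hb hc
  exact rep.v_notMem_convexHull hxy hnxy ha hb hc hya hyb hyc (ne_of_apply_ne _ hpq)
    (ne_of_apply_ne _ hpr) (ne_of_apply_ne _ hqr) (KStarGraph.not_adj_of_adj_of_adj ha hb)
    (KStarGraph.not_adj_of_adj_of_adj hb hc) (KStarGraph.not_adj_of_adj_of_adj hc ha) hxt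
end

section
/- Let p_1,…,p_6 be points of ℝ² in convex position listed in clockwise cyclic order (every triple (p_i, p_j, p_k) with i < j < k is in clockwise order), and let q be a point lying outside the convex hull of {p_1,…,p_6} such that {q, p_1,…,p_6} is in general position. Then q is dangerous for {1,3,5}: there exist distinct indices i_1, i_2 ∈ {1,3,5} and distinct indices i_3, i_4 ∈ {2,4,6} such that p_{i_3} and p_{i_4} lie in different connected components of the complement in ℝ² of the union of the ray from q through p_{i_1} and the ray from q through p_{i_2}. -/
/-!
Since `q` lies outside the hull, a separating functional gives `n` with `0 < dot n (p i - q)`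
for all `i`, so the directions in which `q` sees the vertices lie in an open half-plane and
are linearly ordered by `θ i = tanAngle n (p i - q)`. Convexity makes `θ` cyclically unimodal:
every vertex lies in the cone at `p m` spanned by the two neighbours of `p m`, so if both
neighbours are seen at a smaller (larger) angle than `p m`, so is every vertex. Hence a vertex
that is seen neither first nor last lies angularly between its two neighbours. Take such an
odd `z`, with `θ a < θ z < θ b` for its even neighbours `a`, `b`, and such an even `e`, with
`θ u < θ e < θ v` for its odd neighbours `u`, `v`. Either `θ u < θ a`, and the rays through
`a`, `b` separate `z` from `u`; or `θ a < θ u < θ e < θ v`, and the rays through `a`, `e`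
separate `u` from `v`. The separation holds because the open wedge between two rays is both
open and closed in their complement.
-/

open Set

def Ray (q p : ℝ × ℝ) : Set (ℝ × ℝ) := {x | ∃ t : ℝ, 0 ≤ t ∧ x = q + t • (p - q)}

def Clockwise (a b c : ℝ × ℝ) : Prop :=
  (b.1 - a.1) * (c.2 - a.2) - (b.2 - a.2) * (c.1 - a.1) < 0

open Function

namespace Plane

def cross (u v : ℝ × ℝ) : ℝ := u.1 * v.2 - u.2 * v.1

def dot (u v : ℝ × ℝ) : ℝ := u.1 * v.1 + u.2 * v.2

noncomputable def tanAngle (n u : ℝ × ℝ) : ℝ := cross n u / dot n u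

lemma cross_anticomm (u v : ℝ × ℝ) : cross u v = -cross v u := by
  unfold cross; ring

lemma cross_smul_eq_add (u v w : ℝ × ℝ) :
    cross u w • v = cross v w • u + cross u v • w := by
  ext <;> simp only [cross, Prod.smul_fst, Prod.smul_snd, Prod.fst_add, Prod.snd_add,
    smul_eq_mul] <;> ring

lemma eq_smul_of_cross_eq_zero {u v w : ℝ × ℝ} (hw : cross u w ≠ 0) (h : cross u v = 0) :
    v = (cross v w / cross u w) • u := by
  have key := cross_smul_eq_add u v w
  rw [h, zero_smul, add_zero] at key
  rw [div_eq_inv_mul, mul_smul, ← key, inv_smul_smul₀ hw]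

lemma dot_self_pos {u : ℝ × ℝ} (hu : u ≠ 0) : 0 < dot u u := by
  obtain ⟨a, b⟩ := u
  have : a ≠ 0 ∨ b ≠ 0 := by
    by_contra! h
    exact hu (by simp [h.1, h.2])
  unfold dot
  rcases this with h | h <;> nlinarith [mul_self_pos.2 h, mul_self_nonneg a, mul_self_nonneg b]

lemma cross_sub_ne_zero_of_not_collinear {q x y : ℝ × ℝ} (hx : x ≠ q)
    (h : ¬ Collinear ℝ ({q, x, y} : Set (ℝ × ℝ))) : cross (x - q) (y - q) ≠ 0 := by
  intro h0
  set u := x - q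
  have hperp : cross u (-u.2, u.1) ≠ 0 := by
    have : cross u (-u.2, u.1) = dot u u := by unfold cross dot; ring
    exact this ▸ (dot_self_pos (sub_ne_zero.2 hx)).ne'
  have hy : y ∈ line[ℝ, q, x] := by
    have hyq := eq_smul_of_cross_eq_zero hperp h0
    rw [sub_eq_iff_eq_add] at hyq
    rw [hyq]
    convert AffineMap.lineMap_mem_affineSpan_pair _ q x using 1
    rw [AffineMap.lineMap_apply]
    rfl
  apply h
  rw [Set.pair_comm, Set.insert_comm]
  exact collinear_insert_of_mem_affineSpan_pair hy

lemma cross_sub_eq_zero_of_mem_ray {q p x : ℝ × ℝ} (hx : x ∈ Ray q p) :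
    cross (p - q) (x - q) = 0 := by
  obtain ⟨t, -, rfl⟩ := hx
  simp only [cross, add_sub_cancel_left, Prod.smul_fst, Prod.smul_snd, smul_eq_mul]
  ring

lemma notMem_ray_of_cross_ne_zero {q p x : ℝ × ℝ} (h : cross (p - q) (x - q) ≠ 0) :
    x ∉ Ray q p :=
  fun hx => h (cross_sub_eq_zero_of_mem_ray hx)

lemma mem_ray_of_cross_eq_zero {q p x w : ℝ × ℝ} (hw : cross (p - q) w ≠ 0)
    (h : cross (p - q) (x - q) = 0) (hc : 0 ≤ cross (x - q) w / cross (p - q) w) :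
    x ∈ Ray q p :=
  ⟨_, hc, sub_eq_iff_eq_add'.1 (eq_smul_of_cross_eq_zero hw h)⟩

lemma connectedComponentIn_compl_rays_ne {q a b z w : ℝ × ℝ}
    (hab : 0 < cross (a - q) (b - q))
    (hza : 0 < cross (a - q) (z - q)) (hzb : 0 < cross (z - q) (b - q))
    (hw : cross (a - q) (w - q) < 0 ∨ cross (w - q) (b - q) < 0)
    (hwS : w ∈ (Ray q a ∪ Ray q b)ᶜ) :
    connectedComponentIn (Ray q a ∪ Ray q b)ᶜ z ≠
      connectedComponentIn (Ray q a ∪ Ray q b)ᶜ w := by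
  set S := (Ray q a ∪ Ray q b)ᶜ
  set U := {x | 0 < cross (a - q) (x - q) ∧ 0 < cross (x - q) (b - q)}
  set V := {x | cross (a - q) (x - q) < 0 ∨ cross (x - q) (b - q) < 0}
  have hcont₁ : Continuous fun x => cross (a - q) (x - q) := by unfold cross; fun_prop
  have hcont₂ : Continuous fun x => cross (x - q) (b - q) := by unfold cross; fun_prop
  have hU : IsOpen U :=
    (isOpen_lt continuous_const hcont₁).inter (isOpen_lt continuous_const hcont₂)
  have hV : IsOpen V :=
    (isOpen_lt hcont₁ continuous_const).union (isOpen_lt hcont₂ continuous_const)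
  have hUV : Disjoint U V := by
    rw [Set.disjoint_left]
    rintro x ⟨h₁, h₂⟩ (h | h) <;> linarith
  have hSUV : S ⊆ U ∪ V := by
    intro x hx
    by_contra hUV'
    simp only [U, V, Set.mem_union, Set.mem_ofPred_eq, not_or, not_and_or, not_lt] at hUV'
    obtain ⟨h₁ | h₂, h₃, h₄⟩ := hUV'
    · refine hx (Or.inl (mem_ray_of_cross_eq_zero hab.ne' (le_antisymm h₁ h₃) ?_))
      exact div_nonneg h₄ hab.le
    · refine hx (Or.inr (mem_ray_of_cross_eq_zero (w := a - q) ?_ ?_ ?_))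
      · rw [cross_anticomm]; exact neg_ne_zero.2 hab.ne'
      · rw [cross_anticomm]; exact neg_eq_zero.2 (le_antisymm h₂ h₄)
      · rw [cross_anticomm (x - q), cross_anticomm (b - q), neg_div_neg_eq]
        exact div_nonneg h₃ hab.le
  have hzS : z ∈ S := by
    rintro (h | h)
    · exact hza.ne' (cross_sub_eq_zero_of_mem_ray h)
    · rw [cross_anticomm] at hzb
      exact (neg_pos.1 hzb).ne (cross_sub_eq_zero_of_mem_ray h)
  intro hzw
  have hsub : connectedComponentIn S z ⊆ U :=
    isPreconnected_connectedComponentIn.subset_left_of_subset_union hU hV hUV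
      ((connectedComponentIn_subset S z).trans hSUV) ⟨z, mem_connectedComponentIn hzS, hza, hzb⟩
  have hwU : w ∈ U := hsub (hzw ▸ mem_connectedComponentIn hwS)
  rcases hw with h | h <;> linarith [hwU.1, hwU.2]

lemma tanAngle_sub_tanAngle {n u v : ℝ × ℝ} (hu : dot n u ≠ 0) (hv : dot n v ≠ 0) :
    tanAngle n v - tanAngle n u = dot n n * cross u v / (dot n u * dot n v) := by
  unfold tanAngle
  field_simp
  unfold cross dot
  ring

lemma tanAngle_lt_tanAngle_iff {n u v : ℝ × ℝ} (hu : 0 < dot n u) (hv : 0 < dot n v) :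
    tanAngle n u < tanAngle n v ↔ 0 < cross u v := by
  have hn : 0 < dot n n := dot_self_pos (by rintro rfl; simp [dot] at hu)
  rw [← sub_pos, tanAngle_sub_tanAngle hu.ne' hv.ne', div_pos_iff_of_pos_right (mul_pos hu hv),
    mul_pos_iff_of_pos_left hn]

lemma exists_dot_sub_pos_of_notMem_convexHull {s : Set (ℝ × ℝ)} (hs : s.Finite) {q : ℝ × ℝ}
    (hq : q ∉ convexHull ℝ s) : ∃ n : ℝ × ℝ, ∀ x ∈ s, 0 < dot n (x - q) := by
  obtain ⟨f, u, hfq, hfs⟩ := geometric_hahn_banach_point_closed (convex_convexHull ℝ s)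
    (hs.isClosed_convexHull ℝ) hq
  have hf : ∀ y : ℝ × ℝ, f y = dot (f (1, 0), f (0, 1)) y := by
    intro y
    have hy : y = y.1 • ((1, 0) : ℝ × ℝ) + y.2 • ((0, 1) : ℝ × ℝ) := by ext <;> simp
    conv_lhs => rw [hy]
    rw [map_add, map_smul, map_smul, smul_eq_mul, smul_eq_mul, dot, mul_comm, mul_comm y.2]
  refine ⟨(f (1, 0), f (0, 1)), fun x hx => ?_⟩
  rw [← hf, map_sub]
  linarith [hfs x (subset_convexHull ℝ s hx)]

lemma injective_tanAngle {ι : Type*} {n : ℝ × ℝ} {u : ι → ℝ × ℝ} (hn : ∀ i, 0 < dot n (u i))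
    (hu : Pairwise fun i j => cross (u i) (u j) ≠ 0) : Injective fun i => tanAngle n (u i) := by
  intro i j (hij : tanAngle n (u i) = tanAngle n (u j))
  by_contra hne
  have hsub := tanAngle_sub_tanAngle (hn i).ne' (hn j).ne'
  rw [hij, sub_self, eq_comm, div_eq_zero_iff, mul_eq_zero] at hsub
  have hnn : dot n n ≠ 0 := (dot_self_pos (by rintro rfl; simpa [dot] using hn i)).ne'
  exact hsub.elim (·.elim hnn (hu hne)) (mul_ne_zero (hn i).ne' (hn j).ne')

lemma cross_pos_of_mem_cone {u₁ u₂ u₃ v : ℝ × ℝ} (h₁₂ : 0 < cross u₁ u₂)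
    (h₃₂ : 0 < cross u₃ u₂) (h₁₃ : 0 < cross u₁ u₃) (h₁ : 0 < cross u₁ v) (h₂ : 0 < cross u₂ v) :
    0 < cross u₃ v := by
  have key : cross u₁ u₂ * cross u₃ v = cross u₃ u₂ * cross u₁ v + cross u₁ u₃ * cross u₂ v := by
    unfold cross; ring
  exact pos_of_mul_pos_right (key ▸ by positivity) h₁₂.le

end Plane

open Plane

lemma Clockwise.rotate {a b c : ℝ × ℝ} (h : Clockwise a b c) : Clockwise b c a := by
  unfold Clockwise at h ⊢
  linarith

lemma Clockwise.cross_pos {a b c : ℝ × ℝ} (h : Clockwise a b c) : 0 < cross (a - b) (c - b) := by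
  unfold Clockwise at h
  simp only [cross, Prod.fst_sub, Prod.snd_sub]
  linarith

lemma Clockwise.ne {a b c : ℝ × ℝ} (h : Clockwise a b c) : a ≠ b := by
  rintro rfl
  simp [Clockwise] at h

section Hexagon

variable {p : Fin 6 → ℝ × ℝ} (hcw : ∀ i j k : Fin 6, i < j → j < k → Clockwise (p i) (p j) (p k))
include hcw

lemma clockwise_of_sbtw {i j k : Fin 6} (h : sbtw i j k) : Clockwise (p i) (p j) (p k) := by
  rcases Fin.sbtw_iff.1 h with ⟨hij, hjk⟩ | ⟨hjk, hki⟩ | ⟨hki, hij⟩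
  · exact hcw i j k hij hjk
  · exact (hcw j k i hjk hki).rotate.rotate
  · exact (hcw k i j hki hij).rotate

lemma injective_of_clockwise : Injective p := by
  have key : ∀ i j : Fin 6, i ≠ j → ∃ k, sbtw i j k ∨ sbtw j i k := by
    simp only [Fin.sbtw_iff]; decide
  intro i j hij
  by_contra hne
  obtain ⟨k, hk | hk⟩ := key i j hne
  · exact (clockwise_of_sbtw hcw hk).ne hij
  · exact (clockwise_of_sbtw hcw hk).ne hij.symm

lemma cross_pos_of_neighbors {m d : Fin 6} (hd : d ≠ m) {v : ℝ × ℝ}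
    (h₁ : 0 < cross (p (m - 1) - p m) v) (h₂ : 0 < cross (p (m + 1) - p m) v) :
    0 < cross (p d - p m) v := by
  have key : ∀ m d : Fin 6, d ≠ m → d ≠ m - 1 → d ≠ m + 1 →
      sbtw (m - 1) m (m + 1) ∧ sbtw d m (m + 1) ∧ sbtw (m - 1) m d := by
    simp only [Fin.sbtw_iff]; decide
  rcases eq_or_ne d (m - 1) with rfl | hd₁
  · exact h₁
  rcases eq_or_ne d (m + 1) with rfl | hd₂
  · exact h₂
  obtain ⟨h₁₂, h₃₂, h₁₃⟩ := key m d hd hd₁ hd₂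
  exact cross_pos_of_mem_cone (clockwise_of_sbtw hcw h₁₂).cross_pos
    (clockwise_of_sbtw hcw h₃₂).cross_pos (clockwise_of_sbtw hcw h₁₃).cross_pos h₁ h₂

variable {n q : ℝ × ℝ} (hn : ∀ i, 0 < dot n (p i - q))
include hn

lemma tanAngle_lt_of_neighbors_lt (m : Fin 6)
    (h₁ : tanAngle n (p (m - 1) - q) < tanAngle n (p m - q))
    (h₂ : tanAngle n (p (m + 1) - q) < tanAngle n (p m - q)) (d : Fin 6) (hd : d ≠ m) :
    tanAngle n (p d - q) < tanAngle n (p m - q) := by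
  have key : ∀ x, tanAngle n (p x - q) < tanAngle n (p m - q) ↔
      0 < cross (p x - p m) (p m - q) := by
    intro x
    rw [tanAngle_lt_tanAngle_iff (hn x) (hn m)]
    congr! 1
    simp only [cross, Prod.fst_sub, Prod.snd_sub]
    ring
  rw [key] at h₁ h₂ ⊢
  exact cross_pos_of_neighbors hcw hd h₁ h₂

lemma lt_tanAngle_of_lt_neighbors (m : Fin 6)
    (h₁ : tanAngle n (p m - q) < tanAngle n (p (m - 1) - q))
    (h₂ : tanAngle n (p m - q) < tanAngle n (p (m + 1) - q)) (d : Fin 6) (hd : d ≠ m) :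
    tanAngle n (p m - q) < tanAngle n (p d - q) := by
  have key : ∀ x, tanAngle n (p m - q) < tanAngle n (p x - q) ↔
      0 < cross (p x - p m) (q - p m) := by
    intro x
    rw [tanAngle_lt_tanAngle_iff (hn m) (hn x)]
    congr! 1
    simp only [cross, Prod.fst_sub, Prod.snd_sub]
    ring
  rw [key] at h₁ h₂ ⊢
  exact cross_pos_of_neighbors hcw hd h₁ h₂

end Hexagon

lemma between_neighbors_of_not_extremum {α β : Type*} [LinearOrder β] {θ : α → β}
    (hθ : Injective θ) {x a b : α} (ha : a ≠ x) (hb : b ≠ x)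
    (hmax : θ a < θ x → θ b < θ x → ∀ d ≠ x, θ d < θ x)
    (hmin : θ x < θ a → θ x < θ b → ∀ d ≠ x, θ x < θ d)
    (hup : ∃ y, θ x < θ y) (hdown : ∃ y, θ y < θ x) :
    θ a < θ x ∧ θ x < θ b ∨ θ b < θ x ∧ θ x < θ a := by
  obtain ⟨y, hy⟩ := hup
  obtain ⟨y', hy'⟩ := hdown
  rcases (hθ.ne ha).lt_or_gt with hax | hxa <;> rcases (hθ.ne hb).lt_or_gt with hbx | hxb
  · exact absurd (hmax hax hbx y (fun h => hy.ne (h ▸ rfl))) hy.not_gt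
  · exact Or.inl ⟨hax, hxb⟩
  · exact Or.inr ⟨hbx, hxa⟩
  · exact absurd (hmin hxa hxb y' (fun h => hy'.ne (h ▸ rfl))) hy'.not_gt

lemma ne_of_mem_odd_of_mem_even :
    ∀ i ∈ ({1, 3, 5} : Finset (Fin 6)), ∀ j ∈ ({0, 2, 4} : Finset (Fin 6)), i ≠ j := by
  decide

lemma exists_odd_between_evens_and_odd_outside {θ : Fin 6 → ℝ} (hθ : Injective θ)
    (hmax : ∀ m, θ (m - 1) < θ m → θ (m + 1) < θ m → ∀ d ≠ m, θ d < θ m)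
    (hmin : ∀ m, θ m < θ (m - 1) → θ m < θ (m + 1) → ∀ d ≠ m, θ m < θ d) :
    ∃ a ∈ ({0, 2, 4} : Finset (Fin 6)), ∃ b ∈ ({0, 2, 4} : Finset (Fin 6)),
    ∃ z ∈ ({1, 3, 5} : Finset (Fin 6)), ∃ w ∈ ({1, 3, 5} : Finset (Fin 6)),
      θ a < θ z ∧ θ z < θ b ∧ (θ w < θ a ∨ θ b < θ w) := by
  obtain ⟨M, hM⟩ := Finite.exists_max θ
  obtain ⟨m₀, hm₀⟩ := Finite.exists_min θ
  have hbetween : ∀ x, x ≠ M → x ≠ m₀ → ∃ a ∈ ({x - 1, x + 1} : Finset (Fin 6)),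
      ∃ b ∈ ({x - 1, x + 1} : Finset (Fin 6)), θ a < θ x ∧ θ x < θ b := by
    intro x hxM hxm
    have hne : ∀ x : Fin 6, x - 1 ≠ x ∧ x + 1 ≠ x := by decide
    rcases between_neighbors_of_not_extremum hθ (hne x).1 (hne x).2 (hmax x) (hmin x)
      ⟨M, (hM x).lt_of_ne (hθ.ne hxM)⟩ ⟨m₀, (hm₀ x).lt_of_ne (hθ.ne hxm).symm⟩ with h | h
    · exact ⟨x - 1, by simp, x + 1, by simp, h⟩
    · exact ⟨x + 1, by simp, x - 1, by simp, h⟩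
  have havoid : ∀ M m : Fin 6, (∃ z ∈ ({1, 3, 5} : Finset (Fin 6)), z ≠ M ∧ z ≠ m) ∧
      ∃ e ∈ ({0, 2, 4} : Finset (Fin 6)), e ≠ M ∧ e ≠ m := by decide
  have hparity : ∀ x ∈ ({1, 3, 5} : Finset (Fin 6)), ∀ y ∈ ({x - 1, x + 1} : Finset (Fin 6)),
      y ∈ ({0, 2, 4} : Finset (Fin 6)) := by decide
  have hparity' : ∀ x ∈ ({0, 2, 4} : Finset (Fin 6)), ∀ y ∈ ({x - 1, x + 1} : Finset (Fin 6)),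
      y ∈ ({1, 3, 5} : Finset (Fin 6)) := by decide
  obtain ⟨⟨z, hz, hzM, hzm⟩, ⟨e, he, heM, hem⟩⟩ := havoid M m₀
  obtain ⟨a, ha, b, hb, haz, hzb⟩ := hbetween z hzM hzm
  obtain ⟨u, hu, v, hv, hue, hev⟩ := hbetween e heM hem
  have haE := hparity z hz a ha
  have huO := hparity' e he u hu
  rcases (hθ.ne (ne_of_mem_odd_of_mem_even u huO a haE)).lt_or_gt with hua | hau
  · exact ⟨a, haE, b, hparity z hz b hb, z, hz, u, huO, haz, hzb, Or.inl hua⟩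
  · exact ⟨a, haE, e, he, u, huO, v, hparity' e he v hv, hau, hue, Or.inr hev⟩

/-- if `p 0, …, p 5` are in convex position in clockwise cyclic order
and `q` lies outside their convex hull, with all seven points in general position,
then `q` is dangerous for the odd-indexed triple `{p 0, p 2, p 4}`: some two of the
remaining points are separated by a pair of rays from `q` through two of them. -/
theorem hexagon_outside_point_is_dangerous (p : Fin 6 → ℝ × ℝ) (q : ℝ × ℝ)
    (hcw : ∀ i j k : Fin 6, i < j → j < k → Clockwise (p i) (p j) (p k))
    (hq : q ∉ convexHull ℝ (Set.range p))
    (hgen : ∀ x ∈ insert q (Set.range p), ∀ y ∈ insert q (Set.range p),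
      ∀ z ∈ insert q (Set.range p), x ≠ y → x ≠ z → y ≠ z →
        ¬ Collinear ℝ ({x, y, z} : Set (ℝ × ℝ))) :
    ∃ i₁ i₂ i₃ i₄ : Fin 6,
      i₁ ∈ ({0, 2, 4} : Finset (Fin 6)) ∧ i₂ ∈ ({0, 2, 4} : Finset (Fin 6)) ∧ i₁ ≠ i₂ ∧
      i₃ ∈ ({1, 3, 5} : Finset (Fin 6)) ∧ i₄ ∈ ({1, 3, 5} : Finset (Fin 6)) ∧ i₃ ≠ i₄ ∧
      p i₃ ∈ (Ray q (p i₁) ∪ Ray q (p i₂))ᶜ ∧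
      p i₄ ∈ (Ray q (p i₁) ∪ Ray q (p i₂))ᶜ ∧
      connectedComponentIn (Ray q (p i₁) ∪ Ray q (p i₂))ᶜ (p i₃) ≠
        connectedComponentIn (Ray q (p i₁) ∪ Ray q (p i₂))ᶜ (p i₄) := by
  have hpq : ∀ i, p i ≠ q := fun i h => hq (h ▸ subset_convexHull ℝ _ (mem_range_self i))
  have hcross : Pairwise fun i j => cross (p i - q) (p j - q) ≠ 0 := fun i j hij =>
    cross_sub_ne_zero_of_not_collinear (hpq i) <| hgen _ (mem_insert _ _) _
      (mem_insert_of_mem _ (mem_range_self i)) _ (mem_insert_of_mem _ (mem_range_self j))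
      (hpq i).symm (hpq j).symm ((injective_of_clockwise hcw).ne hij)
  obtain ⟨n, hn⟩ := exists_dot_sub_pos_of_notMem_convexHull (finite_range p) hq
  replace hn : ∀ i, 0 < dot n (p i - q) := fun i => hn _ (mem_range_self i)
  set θ : Fin 6 → ℝ := fun i => tanAngle n (p i - q)
  have hlt : ∀ i j, θ i < θ j ↔ 0 < cross (p i - q) (p j - q) := fun i j =>
    tanAngle_lt_tanAngle_iff (hn i) (hn j)
  have hgt : ∀ i j, θ j < θ i ↔ cross (p i - q) (p j - q) < 0 := fun i j => by
    rw [hlt, cross_anticomm, neg_pos]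
  have hθ : Injective θ := injective_tanAngle hn hcross
  obtain ⟨a, ha, b, hb, z, hz, w, hw, haz, hzb, hwab⟩ := exists_odd_between_evens_and_odd_outside
    hθ (tanAngle_lt_of_neighbors_lt hcw hn) (lt_tanAngle_of_lt_neighbors hcw hn)
  have hS : ∀ i ∈ ({1, 3, 5} : Finset (Fin 6)), p i ∈ (Ray q (p a) ∪ Ray q (p b))ᶜ := by
    intro i hi
    rw [mem_compl_iff, mem_union, not_or]
    exact ⟨notMem_ray_of_cross_ne_zero (hcross (ne_of_mem_odd_of_mem_even i hi a ha).symm),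
      notMem_ray_of_cross_ne_zero (hcross (ne_of_mem_odd_of_mem_even i hi b hb).symm)⟩
  refine ⟨a, b, z, w, ha, hb, fun h => (haz.trans hzb).ne (congrArg θ h), hz, hw, ?_, hS z hz,
    hS w hw, connectedComponentIn_compl_rays_ne ((hlt a b).1 (haz.trans hzb)) ((hlt a z).1 haz)
      ((hlt z b).1 hzb) ?_ (hS w hw)⟩
  · rintro rfl
    rcases hwab with h | h <;> linarith
  · rcases hwab with h | h
    · exact Or.inl ((hgt a w).1 h)
    · exact Or.inr ((hgt w b).1 h)
end

section
/- For all positive integers m and n, the graph K*_{m,n} admits a 2-obstacle representation. -/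
open Set

/-!
Put `b_k = (k, k²)` on the parabola `y = x²` and let `r_k` be the reflection of `b_k` through a
point `O = (0, L)` high above it. Three points of the parabola are never collinear and every `r_k`
lies strictly above every chord of the parabola; since the reflection swaps the two sides of
`K*_{N,N}`, this gives general position. The point `O` is the midpoint of each non-edge `b_k r_k`,
and it lies on no edge `b_i r_j`, as that would put `O`, `b_i`, `b_j` on a line: `{O}` is the
first obstacle. The second is a comb, a frame below and to the right of the `b`'s carrying a
vertical tooth just right of each `b_i`, tall enough to cut every chord `b_i b_j` but below the
steep edges leaving the `b`'s further right, together with its reflection through `O`, which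
blocks the pairs `r_i r_j`. Finally `K*_{m,n}` is an induced subgraph of `K*_{N,N}` for
`N = max m n`.
-/

theorem Collinear.affine_image {k V P V₂ P₂ : Type*} [DivisionRing k] [AddCommGroup V]
    [Module k V] [AddTorsor V P] [AddCommGroup V₂] [Module k V₂] [AddTorsor V₂ P₂] {s : Set P}
    (h : Collinear k s) (f : P →ᵃ[k] P₂) : Collinear k (f '' s) := by
  rw [collinear_iff_exists_forall_eq_smul_vadd] at h ⊢
  obtain ⟨p₀, v, hv⟩ := h
  refine ⟨f p₀, f.linear v, ?_⟩
  rintro _ ⟨p, hp, rfl⟩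
  obtain ⟨r, rfl⟩ := hv p hp
  exact ⟨r, by rw [AffineMap.map_vadd, map_smul]⟩

theorem Collinear.det_eq_zero {p q r : ℝ × ℝ} (h : Collinear ℝ ({p, q, r} : Set (ℝ × ℝ))) :
    (q.1 - p.1) * (r.2 - p.2) - (q.2 - p.2) * (r.1 - p.1) = 0 := by
  rw [collinear_iff_exists_forall_eq_smul_vadd] at h
  obtain ⟨p₀, v, hv⟩ := h
  obtain ⟨tp, rfl⟩ := hv p (by simp)
  obtain ⟨tq, rfl⟩ := hv q (by simp)
  obtain ⟨tr, rfl⟩ := hv r (by simp)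
  simp only [vadd_eq_add, Prod.fst_add, Prod.snd_add, Prod.smul_fst, Prod.smul_snd, smul_eq_mul]
  ring

/-- `(i+j) x - i j` is the chord of the parabola `y = x²` through its points at `i` and `j`. -/
theorem not_collinear_parabola_chord {i j x y : ℝ} (hij : i ≠ j) (hy : y ≠ (i + j) * x - i * j) :
    ¬ Collinear ℝ ({(i, i ^ 2), (j, j ^ 2), (x, y)} : Set (ℝ × ℝ)) := fun h => by
  have hfac : (j - i) * (y - ((i + j) * x - i * j)) = 0 := by linear_combination h.det_eq_zero
  rcases mul_eq_zero.1 hfac with h | h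
  · exact hij (by linarith)
  · exact hy (by linarith)

theorem LinearMap.apply_mem_uIcc_of_mem_segment {E : Type*} [AddCommGroup E] [Module ℝ E]
    (f : E →ₗ[ℝ] ℝ) {P Q z : E} (hz : z ∈ segment ℝ P Q) : f z ∈ uIcc (f P) (f Q) := by
  rw [← segment_eq_uIcc]
  exact image_segment ℝ f.toAffineMap P Q ▸ mem_image_of_mem f hz

theorem IsConnected.union_iUnion {α ι : Type*} [TopologicalSpace α] {s : Set α} {t : ι → Set α}
    (hs : IsConnected s) (ht : ∀ i, IsConnected (t i)) (hst : ∀ i, (s ∩ t i).Nonempty) :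
    IsConnected (s ∪ ⋃ i, t i) := by
  obtain ⟨x, hx⟩ := hs.nonempty
  refine ⟨⟨x, Or.inl hx⟩, isPreconnected_of_forall x ?_⟩
  rintro y (hy | hy)
  · exact ⟨s, subset_union_left, hx, hy, hs.isPreconnected⟩
  · obtain ⟨i, hi⟩ := mem_iUnion.1 hy
    exact ⟨s ∪ t i, union_subset_union_right _ (subset_iUnion t i), Or.inl hx, Or.inr hi,
      (hs.union (hst i) (ht i)).isPreconnected⟩

def ObstacleRep.comap {V W : Type*} {G : SimpleGraph V} {H : SimpleGraph W} {h : ℕ}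
    (f : G ↪g H) (R : ObstacleRep H h) : ObstacleRep G h where
  v := R.v ∘ f
  inj := R.inj.comp f.injective
  genpos _ _ _ hpq hpr hqr :=
    R.genpos _ _ _ (f.injective.ne hpq) (f.injective.ne hpr) (f.injective.ne hqr)
  obs := R.obs
  obs_compact := R.obs_compact
  obs_connected := R.obs_connected
  obs_avoid_edges i _ _ hpq := R.obs_avoid_edges i _ _ (f.map_adj_iff.2 hpq)
  obs_avoid_vertices i p := R.obs_avoid_vertices i (f p)
  blocks _ _ hpq hnadj := R.blocks _ _ (f.injective.ne hpq) (f.map_adj_iff.not.2 hnadj)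

def KStarGraph.embeddingOfLE {m n N : ℕ} (hm : m ≤ N) (hn : n ≤ N) :
    KStarGraph m n ↪g KStarGraph N N where
  toFun := Sum.map (Fin.castLE hm) (Fin.castLE hn)
  inj' := Sum.map_injective.2 ⟨Fin.castLE_injective hm, Fin.castLE_injective hn⟩
  map_rel_iff' := by rintro (i | i) (j | j) <;> simp [KStarGraph]

namespace KStarGraph

variable (N : ℕ)

/-- Makes `2 * centerHeight N - i ^ 2 - j ^ 2 > 4 * N ^ 2` for `i, j < N`, so that the edges
leaving `parabolaPoint i` are steep enough to pass over every tooth to its left. -/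
def centerHeight : ℝ := 3 * N ^ 2 + 1

def center : ℝ × ℝ := (0, centerHeight N)

def reflection : (ℝ × ℝ) ≃ᴬ[ℝ] ℝ × ℝ := ContinuousAffineEquiv.pointReflection ℝ (center N)

def parabolaPoint (k : ℕ) : ℝ × ℝ := (k, (k : ℝ) ^ 2)

def edge (i j : ℕ) : Set (ℝ × ℝ) := segment ℝ (parabolaPoint i) (reflection N (parabolaPoint j))

def drawing : Fin N ⊕ Fin N → ℝ × ℝ :=
  Sum.elim (fun i => parabolaPoint i) (fun j => reflection N (parabolaPoint j))

def base : Set (ℝ × ℝ) := Icc (-(N : ℝ)) N ×ˢ {-1}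

def wall : Set (ℝ × ℝ) := {(N : ℝ)} ×ˢ Icc (-1) (2 * centerHeight N + 1)

def tooth (a : ℕ) : Set (ℝ × ℝ) := {(a : ℝ) + 1 / 2} ×ˢ Icc (-1) (((a : ℝ) + 1 / 2) ^ 2 + N)

def comb : Set (ℝ × ℝ) := (base N ∪ wall N) ∪ ⋃ a : Fin N, tooth N a

def obstacles : Fin 2 → Set (ℝ × ℝ) := ![{center N}, comb N ∪ reflection N '' comb N]

/-- Normal functional of the line through `parabolaPoint i` and `reflection N (parabolaPoint j)`. -/
def edgeNormal (i j : ℕ) : ℝ × ℝ →ₗ[ℝ] ℝ :=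
  (2 * centerHeight N - i ^ 2 - j ^ 2) • LinearMap.fst ℝ ℝ ℝ + ((i : ℝ) + j) • LinearMap.snd ℝ ℝ ℝ

variable {N}

theorem reflection_apply (z : ℝ × ℝ) : reflection N z = (-z.1, 2 * centerHeight N - z.2) := by
  ext
  · simp [reflection, center, Equiv.pointReflection_apply]
  · simp [reflection, center, Equiv.pointReflection_apply]
    ring

theorem reflection_involutive : Function.Involutive (reflection N) :=
  ContinuousAffineEquiv.pointReflection_involutive ℝ _

theorem reflection_image (s : Set (ℝ × ℝ)) : reflection N '' s = reflection N ⁻¹' s :=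
  congrFun reflection_involutive.image_eq_preimage_symm s

theorem reflection_image_segment (P Q : ℝ × ℝ) :
    reflection N '' segment ℝ P Q = segment ℝ (reflection N P) (reflection N Q) :=
  image_segment ℝ (reflection N : (ℝ × ℝ) ≃ᵃ[ℝ] ℝ × ℝ).toAffineMap P Q

theorem reflection_image_openSegment (P Q : ℝ × ℝ) :
    reflection N '' openSegment ℝ P Q = openSegment ℝ (reflection N P) (reflection N Q) :=
  image_openSegment ℝ (reflection N : (ℝ × ℝ) ≃ᵃ[ℝ] ℝ × ℝ).toAffineMap P Q

theorem reflection_image_edge (i j : ℕ) : reflection N '' edge N i j = edge N j i := by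
  rw [edge, reflection_image_segment, reflection_involutive, segment_symm, edge]

theorem center_mem_openSegment (P : ℝ × ℝ) :
    center N ∈ openSegment ℝ P (reflection N P) := by
  simpa [reflection] using midpoint_mem_openSegment (𝕜 := ℝ) P (reflection N P)

theorem drawing_swap (x : Fin N ⊕ Fin N) : drawing N x.swap = reflection N (drawing N x) := by
  rcases x with i | i
  · rfl
  · exact (reflection_involutive _).symm

theorem sq_lt_centerHeight {k : ℕ} (hk : k < N) : (k : ℝ) ^ 2 < centerHeight N := by
  have : (k : ℝ) < N := by exact_mod_cast hk
  unfold centerHeight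
  nlinarith [(Nat.cast_nonneg k : (0 : ℝ) ≤ k)]

theorem centerHeight_pos : 0 < centerHeight N := by
  unfold centerHeight
  positivity

theorem edgeNormal_apply (i j : ℕ) (z : ℝ × ℝ) :
    edgeNormal N i j z = (2 * centerHeight N - i ^ 2 - j ^ 2) * z.1 + ((i : ℝ) + j) * z.2 := by
  simp [edgeNormal]

theorem snd_nonneg_of_mem_edge {i j : ℕ} (hj : j < N) {z : ℝ × ℝ} (hz : z ∈ edge N i j) :
    0 ≤ z.2 := by
  have h := (LinearMap.snd ℝ ℝ ℝ).apply_mem_uIcc_of_mem_segment hz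
  simp only [LinearMap.snd_apply, parabolaPoint, reflection_apply] at h
  have := sq_lt_centerHeight hj
  have := centerHeight_pos (N := N)
  exact (le_inf (by positivity) (by linarith)).trans h.1

theorem fst_le_of_mem_edge {i j : ℕ} {z : ℝ × ℝ} (hz : z ∈ edge N i j) : z.1 ≤ i := by
  have h := (LinearMap.fst ℝ ℝ ℝ).apply_mem_uIcc_of_mem_segment hz
  simp only [LinearMap.fst_apply, parabolaPoint, reflection_apply] at h
  have : (0 : ℝ) ≤ i + j := by positivity
  exact h.2.trans (sup_le le_rfl (by linarith))

theorem edgeNormal_eq_of_mem_edge {i j : ℕ} {z : ℝ × ℝ} (hz : z ∈ edge N i j) :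
    edgeNormal N i j z = edgeNormal N i j (parabolaPoint i) := by
  have h := (edgeNormal N i j).apply_mem_uIcc_of_mem_segment hz
  have hr : edgeNormal N i j (reflection N (parabolaPoint j)) =
      edgeNormal N i j (parabolaPoint i) := by
    simp only [edgeNormal_apply, reflection_apply, parabolaPoint]
    ring
  rwa [hr, uIcc_self, mem_singleton_iff] at h

theorem edgeNormal_lt_of_mem_tooth {i j a : ℕ} (hai : a < i) (hi : i < N) (hj : j < N)
    {z : ℝ × ℝ} (hz : z ∈ tooth N a) :
    edgeNormal N i j z < edgeNormal N i j (parabolaPoint i) := by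
  obtain ⟨hz1, -, hz2⟩ := hz
  rw [mem_singleton_iff] at hz1
  have hai' : (a : ℝ) + 1 ≤ i := by exact_mod_cast hai
  have hi' : (i : ℝ) < N := by exact_mod_cast hi
  have hj' : (j : ℝ) < N := by exact_mod_cast hj
  have ha0 : (0 : ℝ) ≤ a := Nat.cast_nonneg a
  have hj0 : (0 : ℝ) ≤ j := Nat.cast_nonneg j
  set D := 2 * centerHeight N - i ^ 2 - j ^ 2 with hD
  have hD' : 4 * (N : ℝ) ^ 2 < D := by rw [hD, centerHeight]; nlinarith
  have h1 : ((i : ℝ) + j) * z.2 ≤ ((i : ℝ) + j) * (((a : ℝ) + 1 / 2) ^ 2 + N) :=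
    mul_le_mul_of_nonneg_left hz2 (by positivity)
  have h2 : D * (1 / 2) ≤ D * (i - (a + 1 / 2)) :=
    mul_le_mul_of_nonneg_left (by linarith) (by nlinarith)
  have h3 : ((a : ℝ) + 1 / 2) ^ 2 ≤ (i : ℝ) ^ 2 := by nlinarith
  have h4 : ((i : ℝ) + j) * N < 2 * N * N := by nlinarith
  rw [edgeNormal_apply, edgeNormal_apply, hz1]
  simp only [parabolaPoint]
  nlinarith [mul_le_mul_of_nonneg_left h3 (by positivity : (0 : ℝ) ≤ i + j)]

theorem center_notMem_edge {i j : ℕ} (hij : i ≠ j) : center N ∉ edge N i j := by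
  intro h
  have h' := edgeNormal_eq_of_mem_edge h
  simp only [edgeNormal_apply, parabolaPoint, center] at h'
  have hfac : ((j : ℝ) - i) * (centerHeight N + i * j) = 0 := by linear_combination h'
  have hpos : 0 < centerHeight N + i * j := by have := centerHeight_pos (N := N); positivity
  rcases mul_eq_zero.1 hfac with h | h
  · exact hij (by exact_mod_cast (by linarith : (i : ℝ) = j))
  · linarith

theorem disjoint_comb_edge {i j : ℕ} (hi : i < N) (hj : j < N) :
    Disjoint (comb N) (edge N i j) := by
  rw [disjoint_right]
  intro z hz
  have h2 := snd_nonneg_of_mem_edge hj hz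
  have h1 := fst_le_of_mem_edge hz
  have hi' : (i : ℝ) < N := by exact_mod_cast hi
  rintro ((⟨-, hb⟩ | ⟨hw, -⟩) | hz')
  · rw [mem_singleton_iff] at hb
    linarith
  · rw [mem_singleton_iff] at hw
    linarith
  · obtain ⟨a, ha⟩ := mem_iUnion.1 hz'
    rcases le_or_gt i a with hia | hai
    · have hia' : (i : ℝ) ≤ a := by exact_mod_cast hia
      have := mem_singleton_iff.1 ha.1
      linarith
    · exact (edgeNormal_lt_of_mem_tooth hai hi hj ha).ne (edgeNormal_eq_of_mem_edge hz)

theorem parabolaPoint_notMem_comb {k : ℕ} (hk : k < N) : parabolaPoint k ∉ comb N := by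
  unfold parabolaPoint
  rintro ((⟨-, hb⟩ | ⟨hw, -⟩) | hz)
  · simp only [mem_singleton_iff] at hb
    nlinarith [sq_nonneg (k : ℝ)]
  · simp only [mem_singleton_iff, Nat.cast_inj] at hw
    exact hk.ne hw
  · obtain ⟨a, ha, -⟩ := mem_iUnion.1 hz
    have h := mem_singleton_iff.1 ha
    have : 2 * k = 2 * (a : ℕ) + 1 := by exact_mod_cast (by linarith : (2 * k : ℝ) = 2 * a + 1)
    omega

theorem reflection_parabolaPoint_notMem_comb {k : ℕ} (hk : k < N) :
    reflection N (parabolaPoint k) ∉ comb N := by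
  have hk2 := sq_lt_centerHeight hk
  have hk0 : (0 : ℝ) ≤ k := Nat.cast_nonneg k
  have hN0 : (0 : ℝ) < N := by exact_mod_cast (Nat.zero_le k).trans_lt hk
  rw [reflection_apply, parabolaPoint]
  rintro ((⟨-, hb⟩ | ⟨hw, -⟩) | hz)
  · simp only [mem_singleton_iff] at hb
    nlinarith [sq_nonneg (k : ℝ)]
  · simp only [mem_singleton_iff] at hw
    linarith
  · obtain ⟨a, ha, -⟩ := mem_iUnion.1 hz
    simp only [mem_singleton_iff] at ha
    linarith [Nat.cast_nonneg (α := ℝ) (a : ℕ)]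

theorem drawing_notMem_comb (p : Fin N ⊕ Fin N) : drawing N p ∉ comb N := by
  rcases p with i | i
  · exact parabolaPoint_notMem_comb i.2
  · exact reflection_parabolaPoint_notMem_comb i.2

theorem drawing_ne_center (p : Fin N ⊕ Fin N) : drawing N p ≠ center N := by
  intro h
  have h2 := congrArg Prod.snd h
  rcases p with i | i
  · simp only [drawing, Sum.elim_inl, parabolaPoint, center] at h2
    exact (sq_lt_centerHeight i.2).ne h2
  · simp only [drawing, Sum.elim_inr, reflection_apply, parabolaPoint, center] at h2
    linarith [sq_lt_centerHeight i.2]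

theorem drawing_notMem_obstacles (k : Fin 2) (p : Fin N ⊕ Fin N) :
    drawing N p ∉ obstacles N k := by
  fin_cases k
  · exact drawing_ne_center p
  · rintro (h | h)
    · exact drawing_notMem_comb p h
    · rw [reflection_image, mem_preimage, ← drawing_swap] at h
      exact drawing_notMem_comb _ h

theorem disjoint_obstacles_edge (k : Fin 2) {i j : ℕ} (hi : i < N) (hj : j < N) (hij : i ≠ j) :
    Disjoint (obstacles N k) (edge N i j) := by
  fin_cases k
  · exact disjoint_singleton_left.2 (center_notMem_edge hij)
  · refine (disjoint_comb_edge hi hj).union_left ?_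
    rw [← reflection_image_edge j i, disjoint_image_iff reflection_involutive.injective]
    exact disjoint_comb_edge hj hi

theorem isCompact_comb : IsCompact (comb N) :=
  ((isCompact_Icc.prod isCompact_singleton).union (isCompact_singleton.prod isCompact_Icc)).union
    (isCompact_iUnion fun _ => isCompact_singleton.prod isCompact_Icc)

theorem isConnected_comb : IsConnected (comb N) := by
  have hN0 : (0 : ℝ) ≤ N := Nat.cast_nonneg N
  have hL := centerHeight_pos (N := N)
  have hbase : IsConnected (base N) := (isConnected_Icc (by linarith)).prod isConnected_singleton
  have hwall : IsConnected (wall N) := isConnected_singleton.prod (isConnected_Icc (by linarith))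
  have hcorner : ((N : ℝ), (-1 : ℝ)) ∈ base N ∩ wall N :=
    ⟨⟨⟨by linarith, le_rfl⟩, rfl⟩, rfl, le_rfl, by linarith⟩
  refine (hbase.union ⟨_, hcorner⟩ hwall).union_iUnion
    (fun a => isConnected_singleton.prod (isConnected_Icc ?_)) fun a => ?_
  · nlinarith [Nat.cast_nonneg (α := ℝ) (a : ℕ)]
  · have ha : (a : ℝ) + 1 ≤ N := by exact_mod_cast a.2
    have ha0 := Nat.cast_nonneg (α := ℝ) (a : ℕ)
    refine ⟨((a : ℝ) + 1 / 2, -1), Or.inl ⟨⟨by linarith, by linarith⟩, rfl⟩, rfl, le_rfl, ?_⟩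
    nlinarith

theorem isCompact_obstacles (k : Fin 2) : IsCompact (obstacles N k) := by
  fin_cases k
  · exact isCompact_singleton
  · exact isCompact_comb.union (isCompact_comb.image (reflection N).continuous)

theorem isConnected_obstacles (k : Fin 2) : IsConnected (obstacles N k) := by
  fin_cases k
  · exact isConnected_singleton
  · have hN0 : (0 : ℝ) ≤ N := Nat.cast_nonneg N
    have hL := centerHeight_pos (N := N)
    have hcorner : (-(N : ℝ), (-1 : ℝ)) ∈ comb N ∩ reflection N '' comb N := by
      refine ⟨Or.inl (Or.inl ⟨⟨le_rfl, by linarith⟩, rfl⟩), ?_⟩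
      rw [reflection_image, mem_preimage, reflection_apply]
      exact Or.inl (Or.inr ⟨neg_neg _, by linarith, by norm_num⟩)
    exact isConnected_comb.union ⟨_, hcorner⟩
      (isConnected_comb.image _ (reflection N).continuous.continuousOn)

theorem parabolaPoint_injective : Function.Injective parabolaPoint := fun i j h => by
  have h1 : (i : ℝ) = j := congrArg Prod.fst h
  exact_mod_cast h1

theorem drawing_injective : Function.Injective (drawing N) := by
  refine (parabolaPoint_injective.comp Fin.val_injective).sumElim
    ((reflection N).injective.comp (parabolaPoint_injective.comp Fin.val_injective))
    fun i j h => ?_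
  have h2 := congrArg Prod.snd h
  simp only [Function.comp, parabolaPoint, reflection_apply] at h2
  linarith [sq_lt_centerHeight i.2, sq_lt_centerHeight j.2]

theorem not_collinear_inl_inl {i j : Fin N} (hij : i ≠ j) {w : Fin N ⊕ Fin N}
    (hwi : w ≠ .inl i) (hwj : w ≠ .inl j) :
    ¬ Collinear ℝ {drawing N (.inl i), drawing N (.inl j), drawing N w} := by
  have hij' : ((i : ℕ) : ℝ) ≠ (j : ℕ) := by exact_mod_cast Fin.val_injective.ne hij
  rcases w with k | k
  · have hki : ((k : ℕ) : ℝ) ≠ i := by exact_mod_cast Fin.val_injective.ne fun h => hwi (by rw [h])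
    have hkj : ((k : ℕ) : ℝ) ≠ j := by exact_mod_cast Fin.val_injective.ne fun h => hwj (by rw [h])
    refine not_collinear_parabola_chord hij' fun h => ?_
    have hfac : ((k : ℝ) - i) * (k - j) = 0 := by linear_combination h
    rcases mul_eq_zero.1 hfac with h | h
    · exact hki (by linarith)
    · exact hkj (by linarith)
  · simp only [drawing, Sum.elim_inl, Sum.elim_inr, reflection_apply, parabolaPoint]
    refine not_collinear_parabola_chord hij' (ne_of_gt ?_)
    have : 0 ≤ ((i : ℕ) + (j : ℕ) : ℝ) * (k : ℕ) + (i : ℕ) * (j : ℕ) := by positivity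
    linarith [sq_lt_centerHeight k.2, centerHeight_pos (N := N)]

theorem not_collinear_inr_inr {i j : Fin N} (hij : i ≠ j) {w : Fin N ⊕ Fin N}
    (hwi : w ≠ .inr i) (hwj : w ≠ .inr j) :
    ¬ Collinear ℝ {drawing N (.inr i), drawing N (.inr j), drawing N w} := fun h => by
  have h' := h.affine_image (reflection N : (ℝ × ℝ) ≃ᵃ[ℝ] ℝ × ℝ).toAffineMap
  simp only [image_insert_eq, image_singleton, AffineEquiv.coe_toAffineMap,
    ContinuousAffineEquiv.coe_coe, ← drawing_swap, Sum.swap_inr] at h'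
  exact not_collinear_inl_inl hij (fun h => hwi (by rw [← Sum.swap_swap w, h]; rfl))
    (fun h => hwj (by rw [← Sum.swap_swap w, h]; rfl)) h'

theorem genPos_drawing : GenPos (drawing N) := by
  have hside : ∀ x y w : Fin N ⊕ Fin N, x ≠ y → w ≠ x → w ≠ y → x.isLeft = y.isLeft →
      ¬ Collinear ℝ {drawing N x, drawing N y, drawing N w} := by
    rintro (i | i) (j | j) w hxy hwx hwy hside
    · exact not_collinear_inl_inl (fun h => hxy (congrArg _ h)) hwx hwy
    · simp at hside
    · simp at hside
    · exact not_collinear_inr_inr (fun h => hxy (congrArg _ h)) hwx hwy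
  intro p q r hpq hpr hqr
  by_cases hpq' : p.isLeft = q.isLeft
  · exact hside p q r hpq hpr.symm hqr.symm hpq'
  by_cases hpr' : p.isLeft = r.isLeft
  · rw [pair_comm]
    exact hside p r q hpr hpq.symm hqr hpr'
  have hqr' : q.isLeft = r.isLeft := by
    revert hpq' hpr'
    cases p.isLeft <;> cases q.isLeft <;> cases r.isLeft <;> decide
  rw [insert_comm, pair_comm]
  exact hside q r p hqr hpq hpr hqr'

theorem tooth_inter_openSegment {i j : ℕ} (hij : i < j) (hj : j < N) :
    (tooth N i ∩ openSegment ℝ (parabolaPoint i) (parabolaPoint j)).Nonempty := by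
  have hij' : (i : ℝ) + 1 ≤ j := by exact_mod_cast hij
  have hj' : (j : ℝ) + 1 ≤ N := by exact_mod_cast hj
  have hi0 := Nat.cast_nonneg (α := ℝ) i
  have ht : 0 < 1 / (2 * ((j : ℝ) - i)) := div_pos one_pos (by linarith)
  have ht1 : 1 / (2 * ((j : ℝ) - i)) < 1 := by rw [div_lt_one (by linarith)]; linarith
  refine ⟨((i : ℝ) + 1 / 2, (i : ℝ) ^ 2 + (i + j) / 2), ⟨rfl, by nlinarith, by nlinarith⟩,
    1 - 1 / (2 * ((j : ℝ) - i)), 1 / (2 * ((j : ℝ) - i)), by linarith, ht, by ring, ?_⟩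
  have hne : (j : ℝ) - i ≠ 0 := by linarith
  simp only [parabolaPoint, Prod.smul_mk, smul_eq_mul, Prod.mk_add_mk, Prod.mk.injEq]
  constructor <;> field_simp <;> ring

theorem comb_inter_openSegment {i j : ℕ} (hij : i ≠ j) (hi : i < N) (hj : j < N) :
    (comb N ∩ openSegment ℝ (parabolaPoint i) (parabolaPoint j)).Nonempty := by
  wlog h : i < j generalizing i j
  · rw [openSegment_symm]
    exact this hij.symm hj hi (lt_of_le_of_ne (not_lt.1 h) hij.symm)
  obtain ⟨z, hz, hz'⟩ := tooth_inter_openSegment h hj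
  exact ⟨z, Or.inr (mem_iUnion.2 ⟨⟨i, hi⟩, hz⟩), hz'⟩

theorem exists_obstacle_inter_openSegment {p q : Fin N ⊕ Fin N} (hpq : p ≠ q)
    (hnadj : ¬ (KStarGraph N N).Adj p q) :
    ∃ k, (obstacles N k ∩ openSegment ℝ (drawing N p) (drawing N q)).Nonempty := by
  rcases p with i | i <;> rcases q with j | j
  · obtain ⟨z, hz, hz'⟩ :=
      comb_inter_openSegment (Fin.val_injective.ne fun h => hpq (by rw [h])) i.2 j.2
    exact ⟨1, z, Or.inl hz, hz'⟩
  · obtain rfl : i = j := Fin.ext (not_not.1 hnadj)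
    exact ⟨0, _, rfl, center_mem_openSegment _⟩
  · obtain rfl : i = j := Fin.ext (not_not.1 hnadj).symm
    refine ⟨0, _, rfl, ?_⟩
    rw [openSegment_symm]
    exact center_mem_openSegment _
  · obtain ⟨z, hz, hz'⟩ :=
      comb_inter_openSegment (Fin.val_injective.ne fun h => hpq (by rw [h])) i.2 j.2
    refine ⟨1, reflection N z, Or.inr (mem_image_of_mem _ hz), ?_⟩
    rw [drawing, Sum.elim_inr, Sum.elim_inr, ← reflection_image_openSegment]
    exact mem_image_of_mem _ hz'

variable (N) in
def obstacleRep : ObstacleRep (KStarGraph N N) 2 where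
  v := drawing N
  inj := drawing_injective
  genpos := genPos_drawing
  obs := obstacles N
  obs_compact := isCompact_obstacles
  obs_connected := isConnected_obstacles
  obs_avoid_edges k := by
    rintro (i | i) (j | j) hadj
    · exact hadj.elim
    · exact disjoint_obstacles_edge k i.2 j.2 hadj
    · rw [segment_symm]
      exact disjoint_obstacles_edge k j.2 i.2 hadj
    · exact hadj.elim
  obs_avoid_vertices := drawing_notMem_obstacles
  blocks _ _ := exists_obstacle_inter_openSegment

end KStarGraph

theorem kstar_two_obstacle_rep_general (m n : ℕ) :
    Nonempty (ObstacleRep (KStarGraph m n) 2) :=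
  ⟨(KStarGraph.obstacleRep (max m n)).comap
    (KStarGraph.embeddingOfLE (le_max_left m n) (le_max_right m n))⟩

/-- for all positive integers `m` and `n`, the graph `K*_{m,n}` admits
a 2-obstacle representation. -/
theorem kstar_two_obstacle_rep (m n : ℕ) (hm : 0 < m) (hn : 0 < n) :
    Nonempty (ObstacleRep (KStarGraph m n) 2) :=
  kstar_two_obstacle_rep_general m n
end
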